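/- arXiv:2206.00374 — 8 statements merged into one kernel-verified Lean document; each statement's English description precedes it below -/
import Mathlib

section
/- Let g : 𝔻 → 𝔻 be holomorphic with g(0) = 0 and |g'(0)| = λ, and set μ = 1 - λ. Then for every z ∈ 𝔻 with |z| ≤ λ, one has |g(z)| ≥ |z|·(1 - μ·(1 + |z|)/(1 - |z|)). -/
open MeasureTheory Filter Set Metric

private lemma mob_identity (a b : ℂ) :
    ‖1 - (starRingEnd ℂ) a * b‖^2 - ‖a - b‖^2 = (1 - ‖a‖^2)*(1-‖b‖^2) := by
  simp only [← Complex.normSq_eq_norm_sq, Complex.normSq_apply,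
    Complex.sub_re, Complex.sub_im, Complex.mul_re, Complex.mul_im,
    Complex.one_re, Complex.one_im, Complex.conj_re, Complex.conj_im]
  ring

theorem schwarz_type_lower_bound (g : ℂ → ℂ)
    (hg : DifferentiableOn ℂ g (Metric.ball 0 1))
    (hmaps : Set.MapsTo g (Metric.ball 0 1) (Metric.ball 0 1))
    (h0 : g 0 = 0) (lam : ℝ) (hlam : ‖deriv g 0‖ = lam)
    (z : ℂ) (hz : z ∈ Metric.ball (0:ℂ) 1) (hzl : ‖z‖ ≤ lam) :
    ‖z‖ * (1 - (1 - lam) * ((1 + ‖z‖) / (1 - ‖z‖))) ≤ ‖g z‖ := by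
  have hz1 : ‖z‖ < 1 := by simpa using hz
  set r := ‖z‖ with hr
  have hr0 : 0 ≤ r := norm_nonneg z
  have hlam0 : 0 ≤ lam := hlam ▸ norm_nonneg _
  have hball : (0:ℂ) ∈ ball (0:ℂ) 1 := by simp
  have hmaps' : MapsTo g (ball 0 1) (ball (g 0) 1) := by rwa [h0]
  set h := dslope g 0 with hh
  have hhle : ∀ w ∈ ball (0:ℂ) 1, ‖h w‖ ≤ 1 := fun w hw => by
    simpa using Complex.norm_dslope_le_div_of_mapsTo_ball hg (hmaps'.mono_right ball_subset_closedBall) hw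
  have hh0 : h 0 = deriv g 0 := dslope_same g 0
  have hgz : g z = z * h z := by
    rcases eq_or_ne z 0 with rfl | hne
    · simp [h0]
    · rw [hh, dslope_of_ne _ hne, slope_def_field, h0, sub_zero, sub_zero,
        mul_div_cancel₀ _ hne]
  have hnorm : ‖g z‖ = r * ‖h z‖ := by rw [hgz, norm_mul]
  have hlam1 : lam ≤ 1 := by
    have := hhle 0 hball
    rwa [hh0, hlam] at this
  rcases eq_or_lt_of_le hlam1 with hl1 | hl1
  · -- lam = 1 : equality case of Schwarz
    have heq := Complex.affine_of_mapsTo_ball_of_norm_dslope_eq_div hg (hmaps'.mono_right ball_subset_closedBall) hball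
      (by rw [dslope_same, hlam, hl1]; norm_num)
    have hgz' : g z = z * deriv g 0 := by
      have := heq hz
      simpa [h0, dslope_same, smul_eq_mul] using this
    rw [hgz', norm_mul, hlam, ← hl1]
    nlinarith [hz1, hr0]
  · -- lam < 1
    set a := deriv g 0 with ha
    -- strict maximum principle bound
    have hstrict : ∀ w ∈ ball (0:ℂ) 1, ‖h w‖ < 1 := by
      intro w hw
      rcases lt_or_eq_of_le (hhle w hw) with h' | h'
      · exact h'
      · exfalso
        have heq := Complex.affine_of_mapsTo_ball_of_norm_dslope_eq_div hg (hmaps'.mono_right ball_subset_closedBall) hw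
          (by rw [← hh, h']; norm_num)
        have hev : g =ᶠ[nhds (0:ℂ)] fun w' => w' * h w := by
          filter_upwards [isOpen_ball.mem_nhds hball] with x hx
          simpa [h0, smul_eq_mul] using heq hx
        have hda : HasDerivAt (fun w' : ℂ => w' * h w) (1 * h w) 0 :=
          (hasDerivAt_id (0:ℂ)).mul_const (h w)
        have hthis : deriv g 0 = h w := by
          rw [hev.deriv_eq, hda.deriv, one_mul]
        rw [← hlam, ha.trans hthis, h'] at hl1
        exact lt_irrefl _ hl1
    have hna : ‖a‖ = lam := hlam
    have hnca : ‖(starRingEnd ℂ) a‖ = lam := by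
      rw [← hna]; exact RCLike.norm_conj a
    have hden : ∀ w ∈ ball (0:ℂ) 1, 1 - (starRingEnd ℂ) a * h w ≠ 0 := by
      intro w hw hc
      have h1 : (1:ℂ) = (starRingEnd ℂ) a * h w := by
        rwa [sub_eq_zero] at hc
      have : (1:ℝ) ≤ lam := by
        calc (1:ℝ) = ‖(1:ℂ)‖ := by simp
          _ = ‖(starRingEnd ℂ) a * h w‖ := by rw [h1]
          _ = lam * ‖h w‖ := by rw [norm_mul, hnca]
          _ ≤ lam * 1 := by nlinarith [hhle w hw, norm_nonneg (h w)]
          _ = lam := mul_one lam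
      linarith
    set ψ : ℂ → ℂ := fun w => (a - h w) / (1 - (starRingEnd ℂ) a * h w) with hψ
    have hhdiff : DifferentiableOn ℂ h (ball 0 1) :=
      (Complex.differentiableOn_dslope (isOpen_ball.mem_nhds hball)).mpr hg
    have hψdiff : DifferentiableOn ℂ ψ (ball 0 1) :=
      ((differentiableOn_const a).sub hhdiff).div
        ((differentiableOn_const 1).sub ((differentiableOn_const _).mul hhdiff)) hden
    have hψ0 : ψ 0 = 0 := by simp [hψ, hh0, ← ha]
    have hψmaps : MapsTo ψ (ball 0 1) (ball 0 1) := by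
      intro w hw
      have hepos : 0 < ‖1 - (starRingEnd ℂ) a * h w‖ :=
        norm_pos_iff.mpr (hden w hw)
      rw [mem_ball, dist_zero_right, hψ]
      simp only
      rw [norm_div, div_lt_one hepos]
      have hid := mob_identity a (h w)
      rw [hna] at hid
      have hp1 : 0 < 1 - lam^2 := by nlinarith
      have hp2 : 0 < 1 - ‖h w‖^2 := by nlinarith [hstrict w hw, norm_nonneg (h w)]
      have hsq : ‖a - h w‖^2 < ‖1 - (starRingEnd ℂ) a * h w‖^2 := by
        nlinarith [mul_pos hp1 hp2]
      exact lt_of_pow_lt_pow_left₀ 2 (norm_nonneg _) hsq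
    have hψz : ‖ψ z‖ ≤ ‖z‖ := by
      have := Complex.norm_le_norm_of_mapsTo_ball hψdiff (hψmaps.mono_right ball_subset_closedBall) hψ0
        hz1
      simpa using this
    set d := ‖a - h z‖ with hd
    set e := ‖1 - (starRingEnd ℂ) a * h z‖ with he
    set t := ‖h z‖ with ht
    have hepos : 0 < e := norm_pos_iff.mpr (hden z hz)
    have hde : d ≤ r * e := by
      have h2 : ‖(a - h z) / (1 - (starRingEnd ℂ) a * h z)‖ ≤ r := hψz
      rw [norm_div] at h2
      exact (div_le_iff₀ hepos).mp h2
    have hca : (starRingEnd ℂ) a * a = ((lam^2 : ℝ) : ℂ) := by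
      rw [mul_comm, Complex.mul_conj, Complex.normSq_eq_norm_sq, hna]
    have heb : e ≤ (1 - lam^2) + lam * d := by
      have hrw : (1 : ℂ) - (starRingEnd ℂ) a * h z
          = ((1 - lam^2 : ℝ) : ℂ) + (starRingEnd ℂ) a * (a - h z) := by
        push_cast at hca ⊢
        linear_combination -hca
      calc e = ‖((1 - lam^2 : ℝ) : ℂ) + (starRingEnd ℂ) a * (a - h z)‖ := by rw [he, hrw]
        _ ≤ ‖((1 - lam^2 : ℝ) : ℂ)‖ + ‖(starRingEnd ℂ) a * (a - h z)‖ := norm_add_le _ _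
        _ = |1 - lam^2| + lam * d := by rw [Complex.norm_real, norm_mul, hnca, hd, Real.norm_eq_abs]
        _ = (1 - lam^2) + lam * d := by rw [abs_of_nonneg (by nlinarith)]
    have hlt : lam - d ≤ t := by
      have := norm_sub_norm_le a (h z)
      rw [hna, ← ht, ← hd] at this
      linarith
    have hd0 : 0 ≤ d := norm_nonneg _
    have hd1 : d * (1 - lam * r) ≤ r * (1 - lam^2) := by nlinarith [hde, heb, hd0, hr0]
    have hlr : 0 < 1 - lam * r := by nlinarith
    have h1r : 0 < 1 - r := by linarith
    rw [hnorm]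
    apply mul_le_mul_of_nonneg_left _ hr0
    have step : ((1 - t) * (1 - r)) * (1 - lam*r) ≤ ((1-lam)*(1+r)) * (1 - lam*r) := by
      nlinarith [mul_le_mul_of_nonneg_right hd1 h1r.le,
        mul_nonneg (by linarith : (0:ℝ) ≤ 1 - lam + d - (1 - t)) (mul_pos h1r hlr).le,
        mul_nonneg (mul_nonneg hr0 (sq_nonneg (1-lam))) (by linarith : (0:ℝ) ≤ 1 + r)]
    have goal2 : (1 - t) * (1 - r) ≤ (1 - lam) * (1 + r) :=
      le_of_mul_le_mul_right step hlr
    rw [← mul_div_assoc, sub_le_iff_le_add, ← sub_le_iff_le_add', le_div_iff₀ h1r]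
    exact goal2
end

section
/- Let g : 𝔻 → 𝔻 be holomorphic with g(0) = 0, |g'(0)| = ν, and suppose 0 < ε and ν > 1 - ε. Then for every z with |z| = 1 - ε^{1/2} (assuming ε^{1/2} < 1 and 1 - ε^{1/2} < ν) one has |g(z)| ≥ 1 - 3ε^{1/2}. -/
open MeasureTheory Filter Set

/-- Schwarz lemma for maps into the closed unit ball. -/
lemma schwarz_closed {F : ℂ → ℂ} (hd : DifferentiableOn ℂ F (Metric.ball 0 1))
    (hm : ∀ w ∈ Metric.ball (0:ℂ) 1, ‖F w‖ ≤ 1) (h0 : F 0 = 0)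
    {z : ℂ} (hz : z ∈ Metric.ball (0:ℂ) 1) : ‖F z‖ ≤ ‖z‖ := by
  have key : ∀ R : ℝ, 1 < R → ‖dslope F 0 z‖ ≤ R := by
    intro R hR
    have hmaps : Set.MapsTo F (Metric.ball 0 1) (Metric.ball (F 0) R) := by
      intro w hw
      rw [h0, Metric.mem_ball, dist_zero_right]
      exact lt_of_le_of_lt (hm w hw) hR
    have := Complex.norm_dslope_le_div_of_mapsTo_ball hd (hmaps.mono_right Metric.ball_subset_closedBall) hz
    simpa using this
  have hds : ‖dslope F 0 z‖ ≤ 1 := by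
    by_contra hx
    push_neg at hx
    have := key ((1 + ‖dslope F 0 z‖) / 2) (by linarith)
    linarith
  have hFz : F z = z * dslope F 0 z := by
    have h := sub_smul_dslope F 0 z
    simp only [sub_zero, smul_eq_mul, h0] at h
    rw [h]
  calc ‖F z‖ = ‖z‖ * ‖dslope F 0 z‖ := by rw [hFz, norm_mul]
    _ ≤ ‖z‖ * 1 := by
        exact mul_le_mul_of_nonneg_left hds (norm_nonneg z)
    _ = ‖z‖ := mul_one _

lemma normSq_mobius_identity (a u : ℂ) :
    Complex.normSq (1 - (starRingEnd ℂ) a * u) - Complex.normSq (a - u)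
      = (1 - Complex.normSq a) * (1 - Complex.normSq u) := by
  simp only [Complex.normSq_apply, Complex.sub_re, Complex.sub_im, Complex.mul_re,
    Complex.mul_im, Complex.one_re, Complex.one_im, Complex.conj_re, Complex.conj_im]
  ring

lemma pick_quad_ineq (a u : ℂ) (ν t r : ℝ) (ha : ‖a‖ = ν) (hu : ‖u‖ = t)
    (hr0 : 0 ≤ r) (hr1 : r ≤ 1)
    (hineq : ‖a - u‖ ≤ r * ‖1 - (starRingEnd ℂ) a * u‖) :
    ν ^ 2 + t ^ 2 - r ^ 2 - r ^ 2 * ν ^ 2 * t ^ 2 ≤ 2 * (ν * t) * (1 - r ^ 2) := by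
  have hsqineq : Complex.normSq (a - u) ≤ r ^ 2 * Complex.normSq (1 - (starRingEnd ℂ) a * u) := by
    have h1 : ‖a - u‖ ^ 2 ≤ (r * ‖1 - (starRingEnd ℂ) a * u‖) ^ 2 := by
      nlinarith [norm_nonneg (a - u), norm_nonneg (1 - (starRingEnd ℂ) a * u)]
    rw [← Complex.sq_norm, ← Complex.sq_norm]
    nlinarith [norm_nonneg (1 - (starRingEnd ℂ) a * u)]
  set x := ((starRingEnd ℂ) a * u).re with hx
  have hxle : x ≤ ν * t := by
    have h1 : x ≤ ‖(starRingEnd ℂ) a * u‖ := Complex.re_le_norm _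
    rw [norm_mul, RCLike.norm_conj, ha, hu] at h1
    exact h1
  have hnsa : Complex.normSq a = ν ^ 2 := by
    rw [← Complex.sq_norm, ha]
  have hnsu : Complex.normSq u = t ^ 2 := by
    rw [← Complex.sq_norm, hu]
  have hexp1 : Complex.normSq (a - u) = ν ^ 2 - 2 * x + t ^ 2 := by
    have h2 : Complex.normSq (a - u) = Complex.normSq a - 2 * x + Complex.normSq u := by
      simp only [hx, Complex.normSq_apply, Complex.sub_re, Complex.sub_im, Complex.mul_re,
        Complex.mul_im, Complex.conj_re, Complex.conj_im]
      ring
    rw [h2, hnsa, hnsu]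
  have hexp2 : Complex.normSq (1 - (starRingEnd ℂ) a * u) = 1 - 2 * x + ν ^ 2 * t ^ 2 := by
    have h2 : Complex.normSq (1 - (starRingEnd ℂ) a * u)
        = 1 - 2 * x + Complex.normSq a * Complex.normSq u := by
      simp only [hx, Complex.normSq_apply, Complex.sub_re, Complex.sub_im, Complex.mul_re,
        Complex.mul_im, Complex.one_re, Complex.one_im, Complex.conj_re, Complex.conj_im]
      ring
    rw [h2, hnsa, hnsu]
  rw [hexp1, hexp2] at hsqineq
  have hmul : (0:ℝ) ≤ (ν * t - x) * (1 - r ^ 2) :=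
    mul_nonneg (by linarith) (by nlinarith)
  nlinarith [hsqineq, hmul]

lemma real_endgame (s ν t : ℝ) (hs0 : 0 < s) (h3 : 3 * s < 1)
    (hν0 : 0 ≤ ν) (hν1 : ν ≤ 1) (hνlow : 1 - s ^ 2 < ν)
    (ht0 : 0 ≤ t) (ht1 : t ≤ 1)
    (hquad : ν ^ 2 + t ^ 2 - (1 - s) ^ 2 - (1 - s) ^ 2 * ν ^ 2 * t ^ 2
      ≤ 2 * (ν * t) * (1 - (1 - s) ^ 2)) :
    1 - 3 * s ≤ (1 - s) * t := by
  set r : ℝ := 1 - s with hr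
  have hr0 : 0 < r := by rw [hr]; linarith
  have hr1 : r < 1 := by rw [hr]; linarith
  have hAB : (t * (1 - ν * r) - (ν - r)) * (t * (1 + ν * r) - (ν + r)) ≤ 0 := by
    nlinarith [hquad]
  have hνt : ν * t ≤ 1 := by nlinarith
  have hABdiff : (t * (1 + ν * r) - (ν + r)) ≤ (t * (1 - ν * r) - (ν - r)) := by
    nlinarith [mul_nonneg hr0.le (sub_nonneg.mpr hνt)]
  have hA : 0 ≤ t * (1 - ν * r) - (ν - r) := by
    by_contra hc
    push_neg at hc
    have hB : t * (1 + ν * r) - (ν + r) < 0 := lt_of_le_of_lt hABdiff hc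
    exact absurd hAB (not_le.mpr (mul_pos_of_neg_of_neg hc hB))
  have hνr : ν * r < 1 := by nlinarith
  have hpoly : 0 ≤ r * (ν - r) - (1 - 3 * s) * (1 - ν * r) := by
    rw [hr]
    have h1 : (0:ℝ) ≤ (ν - (1 - s ^ 2)) * ((1 - s) * (2 - 3 * s)) :=
      mul_nonneg (by linarith) (by nlinarith)
    nlinarith [mul_pos (mul_pos hs0 hs0) hs0]
  have h1 : 0 ≤ (r * t - (1 - 3 * s)) * (1 - ν * r) := by
    nlinarith [mul_nonneg hr0.le hA, hpoly]
  nlinarith [h1, sub_pos.mpr hνr]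

theorem boundary_estimate (g : ℂ → ℂ)
    (hg : DifferentiableOn ℂ g (Metric.ball 0 1))
    (hmaps : Set.MapsTo g (Metric.ball 0 1) (Metric.ball 0 1))
    (h0 : g 0 = 0) (ν ε : ℝ) (hν : ‖deriv g 0‖ = ν)
    (hε : 0 < ε) (hνε : 1 - ε < ν)
    (hsq : Real.sqrt ε < 1) (hνsq : 1 - Real.sqrt ε < ν)
    (z : ℂ) (hz : ‖z‖ = 1 - Real.sqrt ε) :
    1 - 3 * Real.sqrt ε ≤ ‖g z‖ := by
  set s := Real.sqrt ε with hsdef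
  have hs0 : 0 < s := Real.sqrt_pos.mpr hε
  have hs2 : s ^ 2 = ε := Real.sq_sqrt hε.le
  by_cases h3 : 1 ≤ 3 * s
  · have : (1 : ℝ) - 3 * s ≤ 0 := by linarith
    exact this.trans (norm_nonneg _)
  push_neg at h3
  have hz1 : z ∈ Metric.ball (0:ℂ) 1 := by
    rw [Metric.mem_ball, dist_zero_right, hz]; linarith
  have hzne : z ≠ 0 := by
    intro h; rw [h, norm_zero] at hz; linarith
  set h := dslope g 0 with hh
  have hd : DifferentiableOn ℂ h (Metric.ball 0 1) :=
    (Complex.differentiableOn_dslope (Metric.ball_mem_nhds 0 one_pos)).mpr hg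
  have hmaps' : Set.MapsTo g (Metric.ball 0 1) (Metric.ball (g 0) 1) := by
    rw [h0]; exact hmaps
  have hb : ∀ w ∈ Metric.ball (0:ℂ) 1, ‖h w‖ ≤ 1 := by
    intro w hw
    simpa using Complex.norm_dslope_le_div_of_mapsTo_ball hg (hmaps'.mono_right Metric.ball_subset_closedBall) hw
  have hh0 : h 0 = deriv g 0 := dslope_same g 0
  have hν0 : 0 ≤ ν := hν ▸ norm_nonneg _
  have hν1 : ν ≤ 1 := by
    have := hb 0 (Metric.mem_ball_self one_pos)
    rwa [hh0, hν] at this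
  have hgz : g z = z * h z := by
    have hsub := sub_smul_dslope g 0 z
    simp only [sub_zero, smul_eq_mul, h0] at hsub
    exact hsub.symm
  have hgznorm : ‖g z‖ = (1 - s) * ‖h z‖ := by
    rw [hgz, norm_mul, hz]
  rcases eq_or_lt_of_le hν1 with hνeq | hνlt
  · -- ν = 1 : equality case of Schwarz, g is linear
    have heq : Set.EqOn g (fun w => g 0 + (w - 0) • dslope g 0 0) (Metric.ball 0 1) :=
      Complex.affine_of_mapsTo_ball_of_exists_norm_dslope_eq_div hg (hmaps'.mono_right Metric.ball_subset_closedBall)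
        (Metric.mem_ball_self one_pos) (by rw [dslope_same, hν, hνeq]; norm_num)
    have := heq hz1
    have hnorm : ‖g z‖ = ‖z‖ * ‖deriv g 0‖ := by
      rw [this]
      simp only [h0, zero_add, sub_zero, smul_eq_mul, dslope_same, norm_mul]
    rw [hnorm, hν, ← hνeq, hz]
    nlinarith
  · -- ν < 1 : Schwarz–Pick estimate via a Möbius transform
    set a := h 0 with ha
    have hanorm : ‖a‖ = ν := by rw [hh0]; exact hν
    set F := fun w => (a - h w) / (1 - (starRingEnd ℂ) a * h w) with hF
    have hdenne : ∀ w ∈ Metric.ball (0:ℂ) 1, 1 - (starRingEnd ℂ) a * h w ≠ 0 := by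
      intro w hw hcontra
      have h1 : (1 : ℂ) = (starRingEnd ℂ) a * h w := by
        rw [sub_eq_zero] at hcontra; exact hcontra
      have : (1:ℝ) = ‖(starRingEnd ℂ) a * h w‖ := by rw [← h1]; simp
      rw [norm_mul, RCLike.norm_conj, hanorm] at this
      have := hb w hw
      nlinarith [norm_nonneg (h w)]
    have hdF : DifferentiableOn ℂ F (Metric.ball 0 1) := by
      apply DifferentiableOn.div
      · exact (differentiableOn_const a).sub hd
      · exact (differentiableOn_const 1).sub ((differentiableOn_const _).mul hd)
      · exact hdenne
    have hmF : ∀ w ∈ Metric.ball (0:ℂ) 1, ‖F w‖ ≤ 1 := by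
      intro w hw
      have hu := hb w hw
      set u := h w
      have hid := normSq_mobius_identity a u
      have hnsa : Complex.normSq a = ν ^ 2 := by
        rw [← Complex.sq_norm, hanorm]
      have hnsu : Complex.normSq u ≤ 1 := by
        rw [← Complex.sq_norm]
        nlinarith [norm_nonneg u]
      have hkey : Complex.normSq (a - u) ≤ Complex.normSq (1 - (starRingEnd ℂ) a * u) := by
        have h1 : (0:ℝ) ≤ 1 - Complex.normSq a := by nlinarith
        have h2 : (0:ℝ) ≤ 1 - Complex.normSq u := by linarith
        nlinarith [mul_nonneg h1 h2]
      have hnum : ‖a - u‖ ≤ ‖1 - (starRingEnd ℂ) a * u‖ := by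
        have h1 : ‖a - u‖ ^ 2 ≤ ‖1 - (starRingEnd ℂ) a * u‖ ^ 2 := by
          rw [← Complex.sq_norm, ← Complex.sq_norm] at hkey
          exact hkey
        nlinarith [norm_nonneg (a - u), norm_nonneg (1 - (starRingEnd ℂ) a * u)]
      rw [hF]
      simp only [norm_div]
      have hdpos : 0 < ‖1 - (starRingEnd ℂ) a * u‖ :=
        norm_pos_iff.mpr (hdenne w hw)
      rw [div_le_one hdpos]
      exact hnum
    have hF0 : F 0 = 0 := by
      rw [hF]; simp [← ha]
    have hFz : ‖F z‖ ≤ ‖z‖ := schwarz_closed hdF hmF hF0 hz1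
    -- unpack the inequality
    set u := h z with hu
    set t := ‖u‖ with ht
    have ht0 : 0 ≤ t := norm_nonneg u
    have ht1 : t ≤ 1 := hb z hz1
    set r := (1 : ℝ) - s with hr
    have hr0 : 0 < r := by rw [hr]; linarith
    have hr1 : r < 1 := by rw [hr]; linarith
    have hineq : ‖a - u‖ ≤ r * ‖1 - (starRingEnd ℂ) a * u‖ := by
      have hdpos : 0 < ‖1 - (starRingEnd ℂ) a * u‖ :=
        norm_pos_iff.mpr (hdenne z hz1)
      have : ‖F z‖ = ‖a - u‖ / ‖1 - (starRingEnd ℂ) a * u‖ := by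
        rw [hF]; simp [norm_div, hu]
      rw [this, hz, div_le_iff₀ hdpos] at hFz
      linarith [hFz]
    rw [hgznorm]
    exact real_endgame s ν t hs0 h3 hν0 hν1 (by rw [hs2]; exact hνε) ht0 ht1
      (by simpa [hr] using pick_quad_ineq a u ν t r hanorm ht.symm hr0.le hr1.le hineq)
end

section
/- Let b_n : 𝔻 → 𝔻 be finite Blaschke products with b_n(0) = 0 for all n, and suppose B_n := b_n ∘ ⋯ ∘ b_1 converges locally uniformly to a non-constant B. Then the zero sets satisfy Z(B_n) ⊆ Z(B_{n+1}) for all n, and Z(B) = ⋃_{n≥1} Z(B_n). -/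
open MeasureTheory Filter Set
open Topology

/-- A finite Blaschke product (of some degree `d`), as a self-map of the unit disc. -/
def IsFiniteBlaschke (b : ℂ → ℂ) : Prop :=
  ∃ (d : ℕ) (α : ℂ) (a : Fin d → ℂ), ‖α‖ = 1 ∧ (∀ i, ‖a i‖ < 1) ∧
    ∀ z ∈ Metric.ball (0:ℂ) 1,
      b z = α * ∏ i, ((a i - z) / (1 - (starRingEnd ℂ) (a i) * z))

/-- Forward compositions: `fwdComp f n = f n ∘ ⋯ ∘ f 1` (and `fwdComp f 0 = id`). -/
def fwdComp (f : ℕ → ℂ → ℂ) : ℕ → ℂ → ℂ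
  | 0 => id
  | n + 1 => f (n + 1) ∘ fwdComp f n

/-- The zero set of `f` in the unit disc. -/
def Zeros (f : ℂ → ℂ) : Set ℂ := {z | z ∈ Metric.ball (0:ℂ) 1 ∧ f z = 0}

lemma normSq_lt_one' {a : ℂ} (ha : ‖a‖ < 1) : Complex.normSq a < 1 := by
  rw [← Complex.sq_norm]
  have h : ‖a‖ < 1 := ha
  nlinarith [norm_nonneg a]

lemma denom_ne_zero' {a z : ℂ} (ha : ‖a‖ < 1) (hz : ‖z‖ < 1) :
    (1 : ℂ) - (starRingEnd ℂ) a * z ≠ 0 := by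
  intro h
  have h1 : (1:ℂ) = (starRingEnd ℂ) a * z := by linear_combination h
  have : ‖(starRingEnd ℂ) a * z‖ < 1 := by
    rw [norm_mul, RCLike.norm_conj]
    nlinarith [norm_nonneg a, norm_nonneg z]
  rw [← h1] at this
  simp at this

lemma factor_norm_le_one' {a z : ℂ} (ha : ‖a‖ < 1) (hz : ‖z‖ < 1) :
    ‖(a - z) / (1 - (starRingEnd ℂ) a * z)‖ ≤ 1 := by
  rw [norm_div]
  have hd : (1 : ℂ) - (starRingEnd ℂ) a * z ≠ 0 := denom_ne_zero' ha hz
  rw [div_le_one (norm_pos_iff.mpr hd)]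
  have key : Complex.normSq (1 - (starRingEnd ℂ) a * z) - Complex.normSq (a - z)
      = (1 - Complex.normSq a) * (1 - Complex.normSq z) := by
    simp [Complex.normSq_apply, Complex.sub_re, Complex.sub_im, Complex.mul_re,
      Complex.mul_im, Complex.one_re, Complex.one_im]
    ring
  have h1 : Complex.normSq a < 1 := normSq_lt_one' ha
  have h2 : Complex.normSq z < 1 := normSq_lt_one' hz
  have h3 : Complex.normSq (a - z) ≤ Complex.normSq (1 - (starRingEnd ℂ) a * z) := by
    nlinarith
  calc ‖a - z‖ = Real.sqrt (Complex.normSq (a - z)) := by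
        rw [Complex.norm_def]
    _ ≤ Real.sqrt (Complex.normSq (1 - (starRingEnd ℂ) a * z)) := Real.sqrt_le_sqrt h3
    _ = ‖1 - (starRingEnd ℂ) a * z‖ := by rw [Complex.norm_def]

lemma blaschke_norm_le' {f : ℂ → ℂ} (hf : IsFiniteBlaschke f) (h0 : f 0 = 0) :
    ∀ z ∈ Metric.ball (0:ℂ) 1, ‖f z‖ ≤ ‖z‖ := by
  obtain ⟨d, α, a, hα, ha, hfz⟩ := hf
  have hα0 : α ≠ 0 := by intro h; rw [h] at hα; simp at hα
  have h00 := hfz 0 (by simp)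
  rw [h0] at h00
  have hprod : ∏ i, a i = 0 := by
    have h00' : α * ∏ i, a i = 0 := by simpa using h00.symm
    exact (mul_eq_zero.mp h00').resolve_left hα0
  obtain ⟨i0, -, hi0⟩ := Finset.prod_eq_zero_iff.mp hprod
  intro z hz
  have hz' : ‖z‖ < 1 := by simpa [Metric.mem_ball, dist_zero_right] using hz
  rw [hfz z hz, norm_mul, hα, one_mul, norm_prod]
  rw [← Finset.prod_erase_mul _ _ (Finset.mem_univ i0)]
  have hfi0 : ‖(a i0 - z) / (1 - (starRingEnd ℂ) (a i0) * z)‖ = ‖z‖ := by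
    simp [hi0]
  rw [hfi0]
  have : ∏ i ∈ Finset.univ.erase i0, ‖(a i - z) / (1 - (starRingEnd ℂ) (a i) * z)‖ ≤ 1 :=
    Finset.prod_le_one (fun i _ => norm_nonneg _) (fun i _ => factor_norm_le_one' (ha i) hz')
  nlinarith [norm_nonneg z]

lemma blaschke_diff' {f : ℂ → ℂ} (hf : IsFiniteBlaschke f) :
    DifferentiableOn ℂ f (Metric.ball (0:ℂ) 1) := by
  obtain ⟨d, α, a, hα, ha, hfz⟩ := hf
  have hdiff : DifferentiableOn ℂ
      (fun z => α * ∏ i, ((a i - z) / (1 - (starRingEnd ℂ) (a i) * z)))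
      (Metric.ball (0:ℂ) 1) := by
    intro z hz
    have hz' : ‖z‖ < 1 := by simpa [Metric.mem_ball, dist_zero_right] using hz
    apply DifferentiableAt.differentiableWithinAt
    apply DifferentiableAt.const_mul
    apply DifferentiableAt.fun_finsetProd
    intro i _
    exact ((differentiableAt_const _).sub differentiableAt_id).div
      ((differentiableAt_const _).sub ((differentiableAt_const _).mul differentiableAt_id))
      (denom_ne_zero' (ha i) hz')
  exact hdiff.congr hfz

theorem zeros_of_forward_iteration (b : ℕ → ℂ → ℂ) (B : ℂ → ℂ)
    (hb : ∀ n, 1 ≤ n → IsFiniteBlaschke (b n))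
    (hb0 : ∀ n, 1 ≤ n → b n 0 = 0)
    (hconv : TendstoLocallyUniformlyOn (fun n => fwdComp b n) B atTop (Metric.ball 0 1))
    (hBnc : ¬ ∃ c : ℂ, Set.EqOn B (fun _ => c) (Metric.ball 0 1)) :
    (∀ n, 1 ≤ n → Zeros (fwdComp b n) ⊆ Zeros (fwdComp b (n + 1))) ∧
    Zeros B = ⋃ n : ℕ, Zeros (fwdComp b (n + 1)) := by
  have hble : ∀ n, 1 ≤ n → ∀ z ∈ Metric.ball (0:ℂ) 1, ‖b n z‖ ≤ ‖z‖ :=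
    fun n hn => blaschke_norm_le' (hb n hn) (hb0 n hn)
  -- the compositions map the ball into itself
  have maps : ∀ n, ∀ z ∈ Metric.ball (0:ℂ) 1, fwdComp b n z ∈ Metric.ball (0:ℂ) 1 := by
    intro n
    induction n with
    | zero => intro z hz; exact hz
    | succ n ih =>
      intro z hz
      have h1 := ih z hz
      have h1' : ‖fwdComp b n z‖ < 1 := by
        simpa [Metric.mem_ball, dist_zero_right] using h1
      have h2 := hble (n+1) (by omega) _ h1
      simp only [fwdComp, Function.comp_apply, Metric.mem_ball, dist_zero_right]
      exact lt_of_le_of_lt h2 h1'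
  -- norms decrease along the iteration
  have decr : ∀ n, ∀ z ∈ Metric.ball (0:ℂ) 1,
      ‖fwdComp b (n+1) z‖ ≤ ‖fwdComp b n z‖ := by
    intro n z hz
    exact hble (n+1) (by omega) _ (maps n z hz)
  have anti : ∀ z ∈ Metric.ball (0:ℂ) 1, ∀ n m, n ≤ m →
      ‖fwdComp b m z‖ ≤ ‖fwdComp b n z‖ := by
    intro z hz n m hnm
    induction m, hnm using Nat.le_induction with
    | base => exact le_refl _
    | succ m hm ih => exact (decr m z hz).trans ih
  -- zeros persist
  have persist : ∀ z : ℂ, ∀ n m, n ≤ m → fwdComp b n z = 0 → fwdComp b m z = 0 := by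
    intro z n m hnm h0
    induction m, hnm using Nat.le_induction with
    | base => exact h0
    | succ m hm ih =>
      simp only [fwdComp, Function.comp_apply, ih]
      exact hb0 (m+1) (by omega)
  -- differentiability of the compositions
  have diffOn : ∀ n, DifferentiableOn ℂ (fwdComp b n) (Metric.ball (0:ℂ) 1) := by
    intro n
    induction n with
    | zero => exact differentiableOn_id
    | succ n ih =>
      exact (blaschke_diff' (hb (n+1) (by omega))).comp ih (fun z hz => maps n z hz)
  -- pointwise convergence
  have ptw : ∀ z ∈ Metric.ball (0:ℂ) 1,
      Tendsto (fun n => fwdComp b n z) atTop (𝓝 (B z)) := fun z hz => hconv.tendsto_at hz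
  -- limit norm bound
  have normB_le : ∀ z ∈ Metric.ball (0:ℂ) 1, ∀ n, ‖B z‖ ≤ ‖fwdComp b n z‖ := by
    intro z hz n
    exact le_of_tendsto (ptw z hz).norm
      (eventually_atTop.mpr ⟨n, fun m hm => anti z hz n m hm⟩)
  -- if some composition vanishes at z, so does B
  have BzeroOf : ∀ z ∈ Metric.ball (0:ℂ) 1, ∀ n, fwdComp b n z = 0 → B z = 0 := by
    intro z hz n h0
    have h1 : Tendsto (fun m => fwdComp b m z) atTop (𝓝 (0:ℂ)) := by
      apply Tendsto.congr' _ tendsto_const_nhds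
      filter_upwards [eventually_ge_atTop n] with m hm
      exact (persist z n m hm h0).symm
    exact tendsto_nhds_unique (ptw z hz) h1
  have Bdiff : DifferentiableOn ℂ B (Metric.ball (0:ℂ) 1) :=
    hconv.differentiableOn (Eventually.of_forall diffOn) Metric.isOpen_ball
  have Banal : AnalyticOnNhd ℂ B (Metric.ball (0:ℂ) 1) :=
    Bdiff.analyticOnNhd Metric.isOpen_ball
  constructor
  · intro n hn z hzm
    obtain ⟨hz, h0⟩ := hzm
    refine ⟨hz, ?_⟩
    simp only [fwdComp, Function.comp_apply, h0]
    exact hb0 (n+1) (by omega)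
  · ext z
    simp only [mem_iUnion]
    constructor
    · rintro ⟨hz, hBz⟩
      by_contra hK
      push_neg at hK
      have hne_m : ∀ m, 1 ≤ m → fwdComp b m z ≠ 0 := by
        intro m hm h0
        obtain ⟨k, rfl⟩ := Nat.exists_eq_add_of_le hm
        exact hK k ⟨hz, by simpa [Nat.add_comm] using h0⟩
      have hz' : ‖z‖ < 1 := by simpa [Metric.mem_ball, dist_zero_right] using hz
      rcases (Banal z hz).eventually_eq_zero_or_eventually_ne_zero with hev | hne
      · exact hBnc ⟨0, Banal.eqOn_zero_of_preconnected_of_eventuallyEq_zero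
          (convex_ball (0:ℂ) 1).isPreconnected hz hev⟩
      · rw [eventually_nhdsWithin_iff] at hne
        obtain ⟨ε, hε, hball⟩ := Metric.eventually_nhds_iff.mp hne
        set r := min (ε/2) ((1 - ‖z‖)/2) with hrdef
        have hrpos : 0 < r := lt_min (by linarith) (by linarith)
        have hsub : Metric.closedBall z r ⊆ Metric.ball (0:ℂ) 1 := by
          intro w hw
          rw [Metric.mem_closedBall] at hw
          rw [Metric.mem_ball, dist_zero_right]
          have h1 : dist w 0 ≤ dist w z + dist z 0 := dist_triangle _ _ _
          rw [dist_zero_right] at h1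
          have h2 : r ≤ (1 - ‖z‖)/2 := min_le_right _ _
          calc ‖w‖ = dist w 0 := (dist_zero_right w).symm
            _ ≤ dist w z + dist z 0 := dist_triangle _ _ _
            _ ≤ r + ‖z‖ := by rw [dist_zero_right]; linarith
            _ < 1 := by linarith
        have hBne : ∀ w ∈ Metric.closedBall z r, w ≠ z → B w ≠ 0 := by
          intro w hw hwz
          have hd : dist w z < ε := by
            have := Metric.mem_closedBall.mp hw
            have h2 : r ≤ ε/2 := min_le_left _ _
            linarith
          exact hball hd hwz
        have hsne : (Metric.sphere z r).Nonempty :=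
          NormedSpace.sphere_nonempty.mpr hrpos.le
        have hcont : ContinuousOn (fun w => ‖B w‖) (Metric.sphere z r) :=
          ((Bdiff.continuousOn).mono (Metric.sphere_subset_closedBall.trans hsub)).norm
        obtain ⟨w0, hw0, hmin⟩ := (isCompact_sphere z r).exists_isMinOn hsne hcont
        set δ := ‖B w0‖ with hδdef
        have hw0cb : w0 ∈ Metric.closedBall z r := Metric.sphere_subset_closedBall hw0
        have hw0ne : w0 ≠ z := by
          intro h
          rw [h] at hw0
          have := Metric.mem_sphere.mp hw0
          simp at this
          linarith
        have hδpos : 0 < δ := norm_pos_iff.mpr (hBne w0 hw0cb hw0ne)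
        have h0B : Tendsto (fun n => ‖fwdComp b n z‖) atTop (𝓝 0) := by
          simpa [hBz] using (ptw z hz).norm
        obtain ⟨m, hm1, hm2⟩ : ∃ m, 1 ≤ m ∧ ‖fwdComp b m z‖ < δ := by
          rcases ((eventually_ge_atTop 1).and (h0B.eventually_lt_const hδpos)).exists
            with ⟨m, h1, h2⟩
          exact ⟨m, h1, h2⟩
        have hmz : fwdComp b m z ≠ 0 := hne_m m hm1
        have hmne : ∀ w ∈ Metric.closedBall z r, fwdComp b m w ≠ 0 := by
          intro w hw h0w
          have hwball := hsub hw
          have hBw : B w = 0 := BzeroOf w hwball m h0w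
          have hwz : w ≠ z := by
            intro h
            rw [h] at h0w
            exact hmz h0w
          exact hBne w hw hwz hBw
        have hdc : DiffContOnCl ℂ (fun w => (fwdComp b m w)⁻¹) (Metric.ball z r) := by
          constructor
          · exact ((diffOn m).mono (Metric.ball_subset_closedBall.trans hsub)).inv
              (fun w hw => hmne w (Metric.ball_subset_closedBall hw))
          · rw [closure_ball z hrpos.ne']
            exact (((diffOn m).continuousOn.mono hsub)).inv₀ (fun w hw => hmne w hw)
        have hfr : ∀ w ∈ frontier (Metric.ball z r), ‖(fwdComp b m w)⁻¹‖ ≤ δ⁻¹ := by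
          intro w hw
          rw [frontier_ball z hrpos.ne'] at hw
          have h1 : δ ≤ ‖B w‖ := hmin hw
          have h2 : ‖B w‖ ≤ ‖fwdComp b m w‖ :=
            normB_le w (hsub (Metric.sphere_subset_closedBall hw)) m
          rw [norm_inv]
          exact inv_anti₀ hδpos (h1.trans h2)
        have hzc : z ∈ closure (Metric.ball z r) :=
          subset_closure (Metric.mem_ball_self hrpos)
        have hb2 := Complex.norm_le_of_forall_mem_frontier_norm_le
          Metric.isBounded_ball hdc hfr hzc
        rw [norm_inv] at hb2
        have hpos : 0 < ‖fwdComp b m z‖ := norm_pos_iff.mpr hmz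
        have hfin : δ ≤ ‖fwdComp b m z‖ := by
          rw [inv_le_inv₀ hpos hδpos] at hb2
          exact hb2
        linarith
    · rintro ⟨n, hz, h0⟩
      exact ⟨hz, BzeroOf z hz (n+1) h0⟩
end

section
/- Let f : 𝔻 → 𝔻 be an inner function with f(0) = 0. Then its boundary extension f̂ : 𝕋 → 𝕋 preserves normalized Lebesgue measure on the unit circle: for every Borel set A ⊆ 𝕋, μ(f̂⁻¹(A)) = μ(A), where μ is normalized arc-length measure. -/
open MeasureTheory Filter Set Metric Complex

lemma mean_value_aux {f : ℂ → ℂ} (hd : DifferentiableOn ℂ f (Metric.ball 0 1))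
    {r : ℝ} (hr0 : 0 < r) (hr1 : r < 1) :
    ∫ θ in (0:ℝ)..(2*Real.pi), f ((r:ℂ) * Complex.exp ((θ:ℂ) * Complex.I))
      = (2*Real.pi : ℝ) * f 0 := by
  have hdc : DiffContOnCl ℂ f (ball (0:ℂ) r) := by
    refine ⟨hd.mono (ball_subset_ball hr1.le), ?_⟩
    refine hd.continuousOn.mono ?_
    rw [closure_ball (0:ℂ) hr0.ne']
    exact closedBall_subset_ball hr1
  have key := hdc.circleIntegral_sub_inv_smul (w := 0) (mem_ball_self (by exact_mod_cast hr0))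
  simp only [circleIntegral, deriv_circleMap, sub_zero, smul_eq_mul] at key
  have h1 : ∀ θ : ℝ, circleMap 0 r θ * I * ((circleMap 0 r θ)⁻¹ * f (circleMap 0 r θ))
      = I * f (circleMap 0 r θ) := by
    intro θ
    have hne : circleMap 0 r θ ≠ 0 := circleMap_ne_center hr0.ne'
    field_simp
  simp only [h1] at key
  rw [intervalIntegral.integral_const_mul] at key
  have hX : (∫ x in (0:ℝ)..(2*Real.pi), f (circleMap 0 r x)) = ((2*Real.pi : ℝ) : ℂ) * f 0 := by
    apply mul_left_cancel₀ Complex.I_ne_zero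
    rw [key]; push_cast; ring
  rw [← hX]
  refine intervalIntegral.integral_congr fun θ _ => ?_
  simp [circleMap]

lemma exp_moment {n : ℤ} (hn : n ≠ 0) :
    ∫ θ in (0:ℝ)..(2*Real.pi), Complex.exp ((n:ℂ) * θ * Complex.I) = 0 := by
  have h : ∀ θ : ℝ, (n:ℂ) * θ * Complex.I = ((n:ℂ) * Complex.I) * θ := fun θ => by ring
  simp only [h]
  rw [integral_exp_mul_complex (mul_ne_zero (by exact_mod_cast hn) Complex.I_ne_zero)]
  rw [show ((n:ℂ) * Complex.I * ((2*Real.pi:ℝ):ℂ)) = n * (2 * Real.pi * Complex.I) by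
    push_cast; ring]
  rw [show ((n:ℂ) * Complex.I * ((0:ℝ):ℂ)) = 0 by push_cast; ring]
  rw [Complex.exp_int_mul_two_pi_mul_I, Complex.exp_zero, sub_self, zero_div]

lemma norm_one_monomial {z : ℂ} (hz : ‖z‖ = 1) (a b : ℕ) :
    z ^ a * (star z) ^ b = if b ≤ a then z ^ (a-b) else (star z) ^ (b-a) := by
  have h1 : z * star z = 1 := by
    rw [Complex.star_def, Complex.mul_conj]
    rw [Complex.normSq_eq_norm_sq, hz]
    norm_num
  split_ifs with h
  · rw [← pow_sub_mul_pow z h, mul_assoc, ← mul_pow, h1, one_pow, mul_one]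
  · push_neg at h
    rw [← pow_sub_mul_pow (star z) h.le, ← mul_assoc, mul_comm (z^a), mul_assoc, ← mul_pow,
      h1, one_pow, mul_one]

lemma moment_eq {ν : Measure ℝ} [IsFiniteMeasure ν] {u : ℝ → ℂ}
    (hu1 : ∀ θ, ‖u θ‖ = 1)
    (hmom : ∀ n : ℕ, n ≠ 0 → ∫ θ, u θ ^ n ∂ν = 0) (a b : ℕ) :
    ∫ θ, u θ ^ a * (star (u θ)) ^ b ∂ν
      = if a = b then (((ν Set.univ).toReal : ℝ) : ℂ) else 0 := by
  have hrw : ∀ θ, u θ ^ a * (star (u θ)) ^ b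
      = if b ≤ a then u θ ^ (a-b) else (star (u θ)) ^ (b-a) :=
    fun θ => norm_one_monomial (hu1 θ) a b
  rcases lt_trichotomy a b with h | h | h
  · have hrw' : ∀ θ, u θ ^ a * (star (u θ)) ^ b = (starRingEnd ℂ) (u θ ^ (b-a)) := fun θ => by
      rw [hrw θ, if_neg (not_le.mpr h), ← star_pow]; rfl
    simp only [hrw']
    rw [if_neg h.ne, integral_conj, hmom (b-a) (Nat.sub_ne_zero_of_lt h), map_zero]
  · subst h
    have hrw' : ∀ θ, u θ ^ a * (star (u θ)) ^ a = 1 := fun θ => by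
      rw [hrw θ, if_pos le_rfl, Nat.sub_self, pow_zero]
    simp only [hrw']
    simp [integral_const, Complex.real_smul, measureReal_def]
  · have hrw' : ∀ θ, u θ ^ a * (star (u θ)) ^ b = u θ ^ (a-b) := fun θ => by
      rw [hrw θ, if_pos h.le]
    simp only [hrw']
    rw [if_neg h.ne', hmom (a-b) (Nat.sub_ne_zero_of_lt h)]

lemma restrict_integral_eq (g : ℝ → ℂ) :
    ∫ θ, g θ ∂(volume.restrict (Set.Ico (0:ℝ) (2*Real.pi)))
      = ∫ θ in (0:ℝ)..(2*Real.pi), g θ := by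
  rw [intervalIntegral.integral_of_le (by positivity),
    MeasureTheory.integral_Ioc_eq_integral_Ioo]
  exact MeasureTheory.integral_Ico_eq_integral_Ioo

lemma exp_pow_moment {n : ℕ} (hn : n ≠ 0) :
    ∫ θ, Complex.exp ((θ:ℂ) * Complex.I) ^ n
      ∂(volume.restrict (Set.Ico (0:ℝ) (2*Real.pi))) = 0 := by
  rw [restrict_integral_eq]
  have h : ∀ θ:ℝ, Complex.exp ((θ:ℂ)*Complex.I)^n = Complex.exp (((n:ℤ):ℂ) * θ * Complex.I) := by
    intro θ; rw [← Complex.exp_nat_mul]; congr 1; push_cast; ring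
  simp only [h]
  exact exp_moment (by exact_mod_cast hn)
noncomputable section

local notation "Sph" => Metric.sphere (0:ℂ) 1

lemma cm_integrable (μ : Measure Sph) [IsFiniteMeasure μ] (g : C(Sph, ℂ)) :
    Integrable (⇑g) μ :=
  (integrable_const (‖BoundedContinuousFunction.mkOfCompact g‖)).mono'
    g.continuous.aestronglyMeasurable
    (ae_of_all _ fun x => by
      simpa using BoundedContinuousFunction.norm_coe_le_norm
        (BoundedContinuousFunction.mkOfCompact g) x)

lemma integral_cm_continuous (μ : Measure Sph) [IsFiniteMeasure μ] :
    Continuous (fun g : C(Sph, ℂ) => ∫ x, g x ∂μ) := by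
  refine (LipschitzWith.of_dist_le_mul (K := (μ Set.univ).toNNReal) ?_).continuous
  intro g1 g2
  rw [dist_eq_norm, ← integral_sub (cm_integrable μ g1) (cm_integrable μ g2)]
  calc ‖∫ x, (g1 x - g2 x) ∂μ‖ ≤ dist g1 g2 * (μ Set.univ).toReal := by
        refine norm_integral_le_of_norm_le_const (ae_of_all _ fun x => ?_)
        rw [← dist_eq_norm]
        exact ContinuousMap.dist_apply_le_dist x
    _ = (μ Set.univ).toNNReal * dist g1 g2 := by
        simp [ENNReal.toReal, mul_comm]

lemma integral_eq_of_forall_monomial {μ1 μ2 : Measure Sph}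
    [IsFiniteMeasure μ1] [IsFiniteMeasure μ2]
    (h : ∀ a b : ℕ, ∫ x : Sph, (x:ℂ)^a * (star (x:ℂ))^b ∂μ1
        = ∫ x : Sph, (x:ℂ)^a * (star (x:ℂ))^b ∂μ2)
    (g : C(Sph, ℂ)) : ∫ x, g x ∂μ1 = ∫ x, g x ∂μ2 := by
  classical
  let E : Submodule ℂ C(Sph, ℂ) :=
    { carrier := {p | ∫ x, p x ∂μ1 = ∫ x, p x ∂μ2}
      add_mem' := fun {p} {q} hp hq => by
        simp only [Set.mem_setOf_eq, ContinuousMap.add_apply] at *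
        rw [integral_add (cm_integrable μ1 p) (cm_integrable μ1 q),
          integral_add (cm_integrable μ2 p) (cm_integrable μ2 q), hp, hq]
      zero_mem' := by simp
      smul_mem' := fun c p hp => by
        simp only [Set.mem_setOf_eq, ContinuousMap.smul_apply] at *
        rw [integral_smul, integral_smul, hp] }
  let Z : C(Sph, ℂ) := Polynomial.toContinuousMapOnAlgHom (Metric.sphere (0:ℂ) 1) Polynomial.X
  have hZ : ∀ x : Sph, Z x = (x : ℂ) := fun x => by
    simp [Z, Polynomial.toContinuousMapOnAlgHom_apply]
  have hmonE : ∀ a b : ℕ, (Z ^ a * star Z ^ b) ∈ E := by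
    intro a b
    have hev : ∀ x : Sph, (Z ^ a * star Z ^ b) x = (x:ℂ)^a * (star (x:ℂ))^b := by
      intro x
      simp [ContinuousMap.pow_apply, ContinuousMap.mul_apply, ContinuousMap.star_apply, hZ]
    show (∫ x, (Z ^ a * star Z ^ b) x ∂μ1) = ∫ x, (Z ^ a * star Z ^ b) x ∂μ2
    simp only [hev]
    exact h a b
  have hform : ∀ m ∈ Submonoid.closure ({Z} ∪ star ({Z} : Set C(Sph, ℂ))),
      ∃ a b : ℕ, m = Z ^ a * star Z ^ b := by
    intro m hm
    induction hm using Submonoid.closure_induction with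
    | mem x hx =>
        rcases hx with hx | hx
        · exact ⟨1, 0, by simp [Set.mem_singleton_iff.mp hx]⟩
        · refine ⟨0, 1, ?_⟩
          rw [Set.star_singleton] at hx
          simp [Set.mem_singleton_iff.mp hx]
    | one => exact ⟨0, 0, by simp⟩
    | mul x y _ _ hx hy =>
        obtain ⟨a, b, rfl⟩ := hx
        obtain ⟨c, d, rfl⟩ := hy
        exact ⟨a + c, b + d, by rw [pow_add, pow_add]; ring⟩
  have hE1 : ((polynomialFunctions (Metric.sphere (0:ℂ) 1)).starClosure : Set C(Sph, ℂ)) ⊆ (E : Set C(Sph, ℂ)) := by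
    intro p hp
    rw [SetLike.mem_coe, polynomialFunctions.starClosure_eq_adjoin_X] at hp
    have hp2 : p ∈ Submodule.span ℂ
        ((Submonoid.closure ({Z} ∪ star ({Z} : Set C(Sph, ℂ))) : Submonoid _) : Set _) := by
      rw [← StarAlgebra.adjoin_eq_span]
      exact hp
    refine Submodule.span_le.mpr ?_ hp2
    intro m hm
    obtain ⟨a, b, rfl⟩ := hform m hm
    exact hmonE a b
  have hEclosed : IsClosed (E : Set C(Sph, ℂ)) :=
    isClosed_eq (integral_cm_continuous μ1) (integral_cm_continuous μ2)
  have hgmem : g ∈ closure ((polynomialFunctions (Metric.sphere (0:ℂ) 1)).starClosure : Set C(Sph, ℂ)) := by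
    have h1 : g ∈ ((polynomialFunctions (Metric.sphere (0:ℂ) 1)).starClosure.topologicalClosure :
        Set C(Sph, ℂ)) := by
      rw [polynomialFunctions.starClosure_topologicalClosure]
      trivial
    rwa [StarSubalgebra.topologicalClosure_coe] at h1
  exact closure_minimal hE1 hEclosed hgmem

lemma sphere_measure_ext {μ1 μ2 : Measure Sph}
    [IsFiniteMeasure μ1] [IsFiniteMeasure μ2]
    (h : ∀ g : C(Sph, ℂ), ∫ x, g x ∂μ1 = ∫ x, g x ∂μ2) : μ1 = μ2 := by
  apply MeasureTheory.ext_of_forall_lintegral_eq_of_IsFiniteMeasure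
  intro f
  have hcont : Continuous (fun x : Sph => ((f x : ℝ) : ℂ)) :=
    Complex.continuous_ofReal.comp (NNReal.continuous_coe.comp f.continuous)
  have hg := h ⟨fun x => ((f x : ℝ) : ℂ), hcont⟩
  simp only [ContinuousMap.coe_mk] at hg
  have hint1 : Integrable (fun x : Sph => ((f x : ℝ) : ℂ)) μ1 := cm_integrable μ1 ⟨_, hcont⟩
  have hint2 : Integrable (fun x : Sph => ((f x : ℝ) : ℂ)) μ2 := cm_integrable μ2 ⟨_, hcont⟩
  have e1 := Complex.reCLM.integral_comp_comm hint1
  have e2 := Complex.reCLM.integral_comp_comm hint2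
  simp only [Complex.reCLM_apply, Complex.ofReal_re] at e1 e2
  have hreal : ∫ x, ((f x : ℝ)) ∂μ1 = ∫ x, ((f x : ℝ)) ∂μ2 := by
    rw [e1, e2, hg]
  rw [lintegral_coe_eq_integral _ (f.integrable_of_nnreal μ1),
    lintegral_coe_eq_integral _ (f.integrable_of_nnreal μ2), hreal]

/-- A holomorphic self-map of the unit disc is inner if for a.e. angle the radial
limit exists and has modulus one. -/
def IsInner (f : ℂ → ℂ) : Prop :=
  DifferentiableOn ℂ f (Metric.ball 0 1) ∧
  Set.MapsTo f (Metric.ball 0 1) (Metric.ball 0 1) ∧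
  ∀ᵐ (θ : ℝ) ∂(volume.restrict (Set.Ico (0:ℝ) (2 * Real.pi))),
    ∃ l : ℂ,
      Filter.Tendsto (fun r : ℝ => f ((r : ℂ) * Complex.exp ((θ : ℂ) * Complex.I)))
        (nhdsWithin 1 (Set.Iio 1)) (nhds l) ∧ ‖l‖ = 1

/-- Doering–Mañé: the boundary extension of an inner function fixing the origin
preserves normalized Lebesgue measure on the circle (stated here in the arc-length
parametrization, where the normalization constants cancel). -/
theorem inner_boundary_measure_preserving (f : ℂ → ℂ) (fhat : ℂ → ℂ)
    (hf : IsInner f) (h0 : f 0 = 0)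
    (hfhat : ∀ᵐ (θ : ℝ) ∂(volume.restrict (Set.Ico (0:ℝ) (2 * Real.pi))),
      Filter.Tendsto (fun r : ℝ => f ((r : ℂ) * Complex.exp ((θ : ℂ) * Complex.I)))
        (nhdsWithin 1 (Set.Iio 1))
        (nhds (fhat (Complex.exp ((θ : ℂ) * Complex.I)))) ∧
      ‖fhat (Complex.exp ((θ : ℂ) * Complex.I))‖ = 1)
    (A : Set ℂ) (hA : MeasurableSet A) :
    volume {θ : ℝ | θ ∈ Set.Ico (0:ℝ) (2 * Real.pi) ∧
        fhat (Complex.exp ((θ : ℂ) * Complex.I)) ∈ A} =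
    volume {θ : ℝ | θ ∈ Set.Ico (0:ℝ) (2 * Real.pi) ∧
        Complex.exp ((θ : ℂ) * Complex.I) ∈ A} := by
  classical
  obtain ⟨hdiff, hmaps, -⟩ := hf
  let ν : Measure ℝ := volume.restrict (Set.Ico (0:ℝ) (2 * Real.pi))
  haveI : IsFiniteMeasure ν := ⟨by
    rw [Measure.restrict_apply_univ]
    exact measure_Ico_lt_top⟩
  let e : ℝ → ℂ := fun θ => Complex.exp ((θ:ℂ) * Complex.I)
  let F : ℝ → ℂ := fun θ => fhat (e θ)
  have he1 : ∀ θ, ‖e θ‖ = 1 := fun θ => by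
    simp [e, Complex.norm_exp_ofReal_mul_I]
  have hecont : Continuous e :=
    Complex.continuous_exp.comp (Complex.continuous_ofReal.mul continuous_const)
  -- radii
  let r : ℕ → ℝ := fun k => 1 - 1/(k+2)
  have hr0 : ∀ k, 0 < r k := fun k => by
    have h2 : (1:ℝ)/(k+2) < 1 := by
      rw [div_lt_one (by positivity)]
      have : (0:ℝ) ≤ k := Nat.cast_nonneg k
      linarith
    simp only [r, sub_pos]
    exact h2
  have hr1 : ∀ k, r k < 1 := fun k => by
    have : (0:ℝ) < 1/(k+2) := by positivity
    simp only [r]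
    linarith
  have hrt : Filter.Tendsto r atTop (nhdsWithin 1 (Set.Iio 1)) := by
    rw [tendsto_nhdsWithin_iff]
    constructor
    · have h1 : Filter.Tendsto (fun k : ℕ => (1:ℝ)/(k+2)) atTop (nhds 0) := by
        have := (tendsto_one_div_add_atTop_nhds_zero_nat (𝕜 := ℝ)).comp (tendsto_add_atTop_nat 1)
        convert this using 2 with k
        simp [Function.comp]
        ring
      have h2 := tendsto_const_nhds (x := (1:ℝ)) (f := atTop (α := ℕ)) |>.sub h1
      have h3 : Filter.Tendsto (fun k : ℕ => 1 - 1/((k:ℝ)+2)) atTop (nhds 1) := by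
        simpa using h2
      exact h3
    · exact Filter.Eventually.of_forall fun k => hr1 k
  have hae : ∀ᵐ θ ∂ν, Filter.Tendsto (fun k => f ((r k : ℂ) * e θ)) atTop (nhds (F θ))
      ∧ ‖F θ‖ = 1 := by
    refine hfhat.mono fun θ hθ => ⟨?_, hθ.2⟩
    exact hθ.1.comp hrt
  have hcont_k : ∀ k, Continuous fun θ : ℝ => f ((r k : ℂ) * e θ) := by
    intro k
    have hmem : ∀ θ : ℝ, (r k : ℂ) * e θ ∈ Metric.ball (0:ℂ) 1 := by
      intro θ
      rw [mem_ball_zero_iff, norm_mul, he1 θ, mul_one, Complex.norm_real,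
        Real.norm_eq_abs, abs_of_pos (hr0 k)]
      exact hr1 k
    exact hdiff.continuousOn.comp_continuous (continuous_const.mul hecont) hmem
  have hFmeas : AEMeasurable F ν :=
    aemeasurable_of_tendsto_metrizable_ae atTop (fun k => (hcont_k k).aemeasurable)
      (hae.mono fun θ h => h.1)
  have hF1 : ∀ᵐ θ ∂ν, ‖F θ‖ = 1 := hae.mono fun θ h => h.2
  -- moments of F
  have hmomF : ∀ n : ℕ, n ≠ 0 → ∫ θ, F θ ^ n ∂ν = 0 := by
    intro n hn
    have hconst : ∀ k, ∫ θ, f ((r k : ℂ) * e θ) ^ n ∂ν = 0 := by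
      intro k
      have := mean_value_aux (hdiff.pow n) (hr0 k) (hr1 k)
      have h2 : ∫ θ, f ((r k : ℂ) * e θ) ^ n ∂ν
          = ∫ θ in (0:ℝ)..(2*Real.pi), (f ^ n) ((r k : ℂ) * Complex.exp ((θ:ℂ) * Complex.I)) :=
        restrict_integral_eq _
      rw [h2]
      have h3 : ∀ z : ℂ, (f ^ n) z = f z ^ n := fun z => by simp [Pi.pow_apply]
      calc ∫ θ in (0:ℝ)..(2*Real.pi), (f ^ n) ((r k : ℂ) * Complex.exp ((θ:ℂ) * Complex.I))
          = ((2*Real.pi : ℝ) : ℂ) * (f ^ n) 0 := mean_value_aux (hdiff.pow n) (hr0 k) (hr1 k)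
        _ = 0 := by rw [h3, h0, zero_pow hn, mul_zero]
    have hdct := MeasureTheory.tendsto_integral_of_dominated_convergence
      (F := fun k θ => f ((r k : ℂ) * e θ) ^ n) (f := fun θ => F θ ^ n) (bound := fun _ => 1)
      (fun k => ((hcont_k k).pow n).aestronglyMeasurable)
      (integrable_const 1)
      (fun k => ae_of_all _ fun θ => by
        rw [norm_pow]
        refine pow_le_one₀ (norm_nonneg _) ?_
        have : (r k : ℂ) * e θ ∈ Metric.ball (0:ℂ) 1 := by
          rw [mem_ball_zero_iff, norm_mul, he1 θ, mul_one, Complex.norm_real,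
            Real.norm_eq_abs, abs_of_pos (hr0 k)]
          exact hr1 k
        have := hmaps this
        rw [mem_ball_zero_iff] at this
        exact this.le)
      (hae.mono fun θ h => h.1.pow n)
    simp only [hconst] at hdct
    exact (tendsto_nhds_unique hdct tendsto_const_nhds)
  -- corrected boundary function
  let F' : ℝ → ℂ := fun θ => if ‖F θ‖ = 1 then F θ else 1
  have hF'1 : ∀ θ, ‖F' θ‖ = 1 := fun θ => by
    rw [show F' θ = if ‖F θ‖ = 1 then F θ else 1 from rfl]
    split_ifs with h
    · exact h
    · exact norm_one
  have hFF' : F =ᵐ[ν] F' := hF1.mono fun θ h => by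
    rw [show F' θ = if ‖F θ‖ = 1 then F θ else 1 from rfl, if_pos h]
  have hF'meas : AEMeasurable F' ν := by
    have hs : MeasurableSet {z : ℂ | ‖z‖ = 1} :=
      (isClosed_eq continuous_norm continuous_const).measurableSet
    have hφ : Measurable fun z : ℂ => if ‖z‖ = 1 then z else 1 :=
      Measurable.ite hs measurable_id measurable_const
    exact hφ.comp_aemeasurable hFmeas
  have hmomF' : ∀ n : ℕ, n ≠ 0 → ∫ θ, F' θ ^ n ∂ν = 0 := by
    intro n hn
    have heq : (fun θ => F' θ ^ n) =ᵐ[ν] fun θ => F θ ^ n :=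
      (hFF'.fun_comp (· ^ n)).symm
    rw [integral_congr_ae heq]
    exact hmomF n hn
  have hmomE : ∀ n : ℕ, n ≠ 0 → ∫ θ, e θ ^ n ∂ν = 0 := fun n hn => exp_pow_moment hn
  -- push to the sphere
  let G1 : ℝ → Sph := fun θ => ⟨F' θ, by rw [mem_sphere_zero_iff_norm]; exact hF'1 θ⟩
  let G2 : ℝ → Sph := fun θ => ⟨e θ, by rw [mem_sphere_zero_iff_norm]; exact he1 θ⟩
  have hG1 : AEMeasurable G1 ν := hF'meas.subtype_mk
  have hG2c : Continuous G2 := hecont.subtype_mk _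
  let μ1 : Measure Sph := ν.map G1
  let μ2 : Measure Sph := ν.map G2
  haveI : IsFiniteMeasure μ1 := ν.isFiniteMeasure_map G1
  haveI : IsFiniteMeasure μ2 := ν.isFiniteMeasure_map G2
  have hmoments : ∀ a b : ℕ, ∫ x : Sph, (x:ℂ)^a * (star (x:ℂ))^b ∂μ1
      = ∫ x : Sph, (x:ℂ)^a * (star (x:ℂ))^b ∂μ2 := by
    intro a b
    have hcm : Continuous fun x : Sph => (x:ℂ)^a * (star (x:ℂ))^b := by
      apply Continuous.mul
      · exact (continuous_subtype_val.pow a)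
      · exact ((continuous_star.comp continuous_subtype_val).pow b)
    rw [show μ1 = ν.map G1 from rfl, show μ2 = ν.map G2 from rfl,
      integral_map hG1 hcm.aestronglyMeasurable,
      integral_map hG2c.aemeasurable hcm.aestronglyMeasurable]
    have l1 : ∫ θ, ((G1 θ : ℂ))^a * (star ((G1 θ : ℂ)))^b ∂ν
        = ∫ θ, F' θ ^ a * (star (F' θ))^b ∂ν := rfl
    have l2 : ∫ θ, ((G2 θ : ℂ))^a * (star ((G2 θ : ℂ)))^b ∂ν
        = ∫ θ, e θ ^ a * (star (e θ))^b ∂ν := rfl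
    rw [l1, l2, moment_eq hF'1 hmomF' a b, moment_eq he1 hmomE a b]
  have key : μ1 = μ2 := sphere_measure_ext (integral_eq_of_forall_monomial hmoments)
  -- conclude
  have hsets1 : {θ : ℝ | θ ∈ Set.Ico (0:ℝ) (2 * Real.pi) ∧
      fhat (Complex.exp ((θ:ℂ) * Complex.I)) ∈ A}
      = F ⁻¹' A ∩ Set.Ico (0:ℝ) (2 * Real.pi) := by
    ext θ; simp [F, e, and_comm]
  have hsets2 : {θ : ℝ | θ ∈ Set.Ico (0:ℝ) (2 * Real.pi) ∧
      Complex.exp ((θ:ℂ) * Complex.I) ∈ A}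
      = e ⁻¹' A ∩ Set.Ico (0:ℝ) (2 * Real.pi) := by
    ext θ; simp [e, and_comm]
  rw [hsets1, hsets2, ← Measure.restrict_apply' measurableSet_Ico,
    ← Measure.restrict_apply' measurableSet_Ico]
  have hAS : MeasurableSet ((Subtype.val : Sph → ℂ) ⁻¹' A) := hA.preimage measurable_subtype_coe
  have h1 : ν (F ⁻¹' A) = ν (F' ⁻¹' A) := by
    refine measure_congr (hFF'.mono fun θ h => ?_)
    exact congrArg (· ∈ A) h
  have h2 : ν (F' ⁻¹' A) = μ1 ((Subtype.val : Sph → ℂ) ⁻¹' A) := by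
    rw [show μ1 = ν.map G1 from rfl, Measure.map_apply_of_aemeasurable hG1 hAS]
    rfl
  have h3 : ν (e ⁻¹' A) = μ2 ((Subtype.val : Sph → ℂ) ⁻¹' A) := by
    rw [show μ2 = ν.map G2 from rfl, Measure.map_apply_of_aemeasurable hG2c.aemeasurable hAS]
    rfl
  show ν (F ⁻¹' A) = ν (e ⁻¹' A)
  rw [h1, h2, key, ← h3]
end
end

section
/- Let b(z) = z·∏_{i=1}^{d} (|z_i|/z_i)·(z_i - z)/(1 - \bar{z_i} z) be a finite Blaschke product with b(0) = 0 and non-zero zeros z_i = |z_i| e^{iθ_i}. Then for θ ∈ [0, 2π) with θ ≠ θ_i for all i, the boundary argument satisfies arg(b̂(e^{iθ})/e^{iθ}) = -2 ∑_{i=1}^{d} arctan( (1 - |z_i|) / ((1 + |z_i|) tan((θ - θ_i)/2)) ). -/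
lemma key (r t : ℝ) (hr0 : 0 ≤ r) (hr1 : r < 1) (hs : Real.sin (t/2) ≠ 0) :
    ((r:ℂ) - Complex.exp ((t:ℂ) * Complex.I)) / (1 - (r:ℂ) * Complex.exp ((t:ℂ) * Complex.I)) =
    Complex.exp (Complex.I * ((-2 * Real.arctan ((1-r)/((1+r)*Real.tan (t/2)))) : ℝ)) := by
  set C := Real.cos (t/2) with hC
  set S := Real.sin (t/2) with hS
  have h1r : (1:ℝ) + r ≠ 0 := by positivity
  have harg : (1-r)/((1+r)*Real.tan (t/2)) = (1-r)*C/((1+r)*S) := by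
    rcases eq_or_ne C 0 with h | h
    · rw [Real.tan_eq_sin_div_cos, ← hC, ← hS, h]
      simp
    · rw [Real.tan_eq_sin_div_cos, ← hC, ← hS]
      field_simp
  rw [harg]
  set x := (1-r)*C/((1+r)*S) with hx
  set α := Real.arctan x with hα
  have hcα : Real.cos α ≠ 0 := by rw [hα]; exact (Real.cos_arctan_pos x).ne'
  have htan : Real.sin α = x * Real.cos α := by
    have h := Real.tan_arctan x
    rw [← hα, Real.tan_eq_sin_div_cos] at h
    field_simp at h
    linarith
  have key0 : Real.cos α * ((1-r)*C) = Real.sin α * ((1+r)*S) := by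
    rw [htan, hx]
    field_simp
  have hsc : Real.sin α ^ 2 + Real.cos α ^ 2 = 1 := Real.sin_sq_add_cos_sq α
  -- complex versions
  have key0C : (Real.cos α : ℂ) * ((1-(r:ℂ))*C) = (Real.sin α : ℂ) * ((1+(r:ℂ))*S) := by
    exact_mod_cast key0
  have hscC : (Real.sin α : ℂ)^2 + (Real.cos α : ℂ)^2 = 1 := by exact_mod_cast hsc
  have hCS : (C:ℂ)^2 + (S:ℂ)^2 = 1 := by
    have h5 := Real.cos_sq_add_sin_sq (t/2)
    rw [← hS, ← hC] at h5
    exact_mod_cast h5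
  set P : ℂ := Complex.exp (((t/2 : ℝ):ℂ) * Complex.I) with hPdef
  have hP : P = (C:ℂ) + (S:ℂ) * Complex.I := by
    rw [hPdef, Complex.exp_mul_I, ← Complex.ofReal_cos, ← Complex.ofReal_sin, ← hC, ← hS]
  have hexp : Complex.exp ((t:ℂ) * Complex.I) = P^2 := by
    rw [hPdef, sq, ← Complex.exp_add]
    congr 1
    push_cast
    ring
  set ca := Real.cos α
  set sa := Real.sin α
  set A1 : ℂ := (1-(r:ℂ))*(C:ℂ) with hA1
  set A2 : ℂ := (1+(r:ℂ))*(S:ℂ) with hA2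
  have hnum : (r:ℂ) - Complex.exp ((t:ℂ) * Complex.I) = -(P * (A1 + A2 * Complex.I)) := by
    rw [hexp, hP, hA1, hA2]
    linear_combination ((r:ℂ)*(S:ℂ)^2) * Complex.I_sq - (r:ℂ) * hCS
  have hden2 : (1:ℂ) - (r:ℂ) * Complex.exp ((t:ℂ) * Complex.I) = P * (A1 - A2 * Complex.I) := by
    rw [hexp, hP, hA1, hA2]
    linear_combination ((S:ℂ)^2) * Complex.I_sq - hCS
  have hQexp : Complex.exp (Complex.I * ((-2*α : ℝ) : ℂ)) = ((ca:ℂ) - (sa:ℂ) * Complex.I)^2 := by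
    have h0 : Complex.I * ((-2*α:ℝ):ℂ) = ((-α:ℝ):ℂ)*Complex.I + ((-α:ℝ):ℂ)*Complex.I := by
      push_cast; ring
    rw [h0, Complex.exp_add, Complex.exp_mul_I, ← Complex.ofReal_cos, ← Complex.ofReal_sin,
      Real.cos_neg, Real.sin_neg, Complex.ofReal_neg]
    ring
  have hQB : ((ca:ℂ) - (sa:ℂ) * Complex.I)^2 * (A1 - A2 * Complex.I) = -(A1 + A2 * Complex.I) := by
    have key0C' : (ca:ℂ) * A1 = (sa:ℂ) * A2 := by rw [hA1, hA2]; exact key0C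
    linear_combination (A1*(sa:ℂ)^2 + 2*(ca:ℂ)*(sa:ℂ)*A2 - (sa:ℂ)^2*A2*Complex.I) * Complex.I_sq
      + (2*(ca:ℂ) - 2*(sa:ℂ)*Complex.I) * key0C' - (A1 + A2*Complex.I) * hscC
  have hden : (1 : ℂ) - (r:ℂ) * Complex.exp ((t:ℂ) * Complex.I) ≠ 0 := by
    intro h
    have h2 : (r:ℂ) * Complex.exp ((t:ℂ) * Complex.I) = 1 := (sub_eq_zero.mp h).symm
    have h3 : ‖(r:ℂ) * Complex.exp ((t:ℂ) * Complex.I)‖ = 1 := by rw [h2]; simp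
    rw [norm_mul] at h3
    simp [Complex.norm_exp_ofReal_mul_I] at h3
    rw [_root_.abs_of_nonneg hr0] at h3
    linarith
  rw [div_eq_iff hden, hQexp, hnum, hden2]
  linear_combination (-P) * hQB

open MeasureTheory Filter Set

/-- The boundary argument identity for a finite Blaschke product fixing the origin:
the boundary value satisfies
`b(e^{iθ})/e^{iθ} = exp(-2i ∑_i arctan((1-|z_i|)/((1+|z_i|) tan((θ-θ_i)/2))))`,
which is the identity `arg(b̂(e^{iθ})/e^{iθ}) = -2 ∑_i arctan(...)` (read modulo `2π`). -/
theorem blaschke_boundary_argument (d : ℕ) (z : Fin d → ℂ) (θi : Fin d → ℝ)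
    (hz : ∀ i, z i ∈ Metric.ball (0:ℂ) 1 ∧ z i ≠ 0)
    (hzpolar : ∀ i, z i = (‖z i‖ : ℂ) * Complex.exp ((θi i : ℂ) * Complex.I))
    (hθi : ∀ i, θi i ∈ Set.Ico (0:ℝ) (2 * Real.pi))
    (θ : ℝ) (hθ : θ ∈ Set.Ico (0:ℝ) (2 * Real.pi)) (hne : ∀ i, θ ≠ θi i)
    (b : ℂ → ℂ)
    (hb : ∀ w : ℂ, b w = w * ∏ i,
      ((‖z i‖ : ℂ) / z i) * ((z i - w) / (1 - (starRingEnd ℂ) (z i) * w))) :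
    b (Complex.exp ((θ : ℂ) * Complex.I)) / Complex.exp ((θ : ℂ) * Complex.I) =
      Complex.exp (Complex.I *
        ((-2 * ∑ i, Real.arctan ((1 - ‖z i‖) /
          ((1 + ‖z i‖) * Real.tan ((θ - θi i) / 2)))) : ℝ)) := by
  set w := Complex.exp ((θ : ℂ) * Complex.I) with hw
  have hw0 : w ≠ 0 := Complex.exp_ne_zero _
  have hstep1 : b w / w = ∏ i,
      ((‖z i‖ : ℂ) / z i) * ((z i - w) / (1 - (starRingEnd ℂ) (z i) * w)) := by
    rw [hb w, mul_comm, mul_div_assoc, div_self hw0, mul_one]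
  have hfac : ∀ i, ((‖z i‖ : ℂ) / z i) * ((z i - w) / (1 - (starRingEnd ℂ) (z i) * w)) =
      ((‖z i‖ : ℂ) - Complex.exp (((θ - θi i : ℝ):ℂ) * Complex.I)) /
        (1 - (‖z i‖ : ℂ) * Complex.exp (((θ - θi i : ℝ):ℂ) * Complex.I)) := by
    intro i
    have hr0 : (‖z i‖ : ℂ) ≠ 0 := by
      simpa using (hz i).2
    set Eφ := Complex.exp ((θi i : ℂ) * Complex.I) with hEφ
    have hEφ0 : Eφ ≠ 0 := Complex.exp_ne_zero _
    have hsub : Complex.exp (((θ - θi i : ℝ):ℂ) * Complex.I) = w / Eφ := by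
      rw [hw, hEφ, ← Complex.exp_sub]
      congr 1
      push_cast
      ring
    have hconj : (starRingEnd ℂ) (z i) = (‖z i‖ : ℂ) / Eφ := by
      rw [hzpolar i, map_mul, ← Complex.exp_conj]
      have : (starRingEnd ℂ) ((θi i : ℂ) * Complex.I) = -((θi i : ℂ) * Complex.I) := by
        simp [Complex.conj_I, mul_comm]
      rw [this, Complex.exp_neg]
      simp [hEφ, div_eq_mul_inv]
    have hlt : ‖z i‖ < 1 := by
      have := (hz i).1
      simpa [Metric.mem_ball] using this
    have hd1 : 1 - (starRingEnd ℂ) (z i) * w ≠ 0 := by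
      intro h
      have h2 : (starRingEnd ℂ) (z i) * w = 1 := (sub_eq_zero.mp h).symm
      have h3 : ‖(starRingEnd ℂ) (z i) * w‖ = 1 := by rw [h2]; simp
      rw [norm_mul, RCLike.norm_conj, hw] at h3
      simp [Complex.norm_exp_ofReal_mul_I] at h3
      exact absurd h3 hlt.ne
    have hd2 : 1 - (‖z i‖ : ℂ) * Complex.exp (((θ - θi i : ℝ):ℂ) * Complex.I) ≠ 0 := by
      intro h
      have h2 : (‖z i‖:ℂ) * Complex.exp (((θ - θi i : ℝ):ℂ) * Complex.I) = 1 :=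
        (sub_eq_zero.mp h).symm
      have h3 : ‖(‖z i‖:ℂ) * Complex.exp (((θ - θi i : ℝ):ℂ) * Complex.I)‖ = 1 := by
        rw [h2]; simp
      rw [norm_mul] at h3
      simp [Complex.norm_exp, Complex.norm_real, _root_.abs_of_nonneg (norm_nonneg (z i))] at h3
      exact absurd h3 hlt.ne
    have hz0 : z i ≠ 0 := (hz i).2
    rw [div_mul_div_comm, div_eq_div_iff (mul_ne_zero hz0 hd1) hd2, hconj, hsub]
    rw [hzpolar i]
    simp only [norm_mul, Complex.norm_exp_ofReal_mul_I, Complex.norm_real, norm_norm, mul_one]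
    field_simp
    ring
  rw [hstep1]
  have hkey : ∀ i, ((‖z i‖ : ℂ) / z i) * ((z i - w) / (1 - (starRingEnd ℂ) (z i) * w)) =
      Complex.exp (Complex.I * ((-2 * Real.arctan ((1 - ‖z i‖) /
        ((1 + ‖z i‖) * Real.tan ((θ - θi i) / 2)))) : ℝ)) := by
    intro i
    rw [hfac i]
    apply key
    · exact norm_nonneg _
    · have := (hz i).1
      simpa [Metric.mem_ball] using this
    · -- sin ((θ - θi i)/2) ≠ 0
      have hpi := Real.pi_pos
      have h1 := hθ.1; have h2 := hθ.2
      have h3 := (hθi i).1; have h4 := (hθi i).2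
      have hb1 : -Real.pi < (θ - θi i)/2 := by linarith
      have hb2 : (θ - θi i)/2 < Real.pi := by linarith
      intro h
      have := (Real.sin_eq_zero_iff_of_lt_of_lt hb1 hb2).mp h
      have : θ = θi i := by linarith
      exact hne i this
  rw [Finset.prod_congr rfl (fun i _ => hkey i), ← Complex.exp_sum]
  congr 1
  rw [show ((-2 * ∑ i, Real.arctan ((1 - ‖z i‖) /
      ((1 + ‖z i‖) * Real.tan ((θ - θi i) / 2))) : ℝ) : ℂ) =
      ∑ i, ((-2 * Real.arctan ((1 - ‖z i‖) /
      ((1 + ‖z i‖) * Real.tan ((θ - θi i) / 2))) : ℝ) : ℂ) by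
    push_cast
    rw [Finset.mul_sum]]
  rw [Finset.mul_sum]
end

section
/- For a ∈ (0,1) and θ₀ ∈ [0, 2π), the integral (1/2π) ∫₀^{2π} |2 arctan( (1 - a) / ((1 + a) tan((θ - θ₀)/2)) )| dθ is bounded above by (2 + log 2π²)(1 - a) + 2(1 - a) log(1/(1 - a)). -/
open MeasureTheory Filter Set

lemma myAbsArctanLe (u : ℝ) : |Real.arctan u| ≤ |u| := by
  have key : ∀ v : ℝ, 0 ≤ v → Real.arctan v ≤ v := by
    intro v hv
    rcases eq_or_lt_of_le hv with h | h
    · simp [← h]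
    · have h1 : 0 < Real.arctan v := by simpa using Real.arctan_strictMono h
      have h2 := Real.arctan_lt_pi_div_two v
      have := Real.lt_tan h1 h2
      rw [Real.tan_arctan] at this; linarith
  rcases le_or_gt 0 u with h | h
  · have hnn : 0 ≤ Real.arctan u := by
      rcases eq_or_lt_of_le h with h' | h'
      · simp [← h']
      · exact (by simpa using Real.arctan_strictMono h' : (0:ℝ) < _).le
    rw [abs_of_nonneg h, abs_of_nonneg hnn]
    exact key u h
  · rw [abs_of_neg h, abs_of_neg (by simpa using Real.arctan_strictMono h), ← Real.arctan_neg]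
    exact key (-u) (by linarith)

lemma myAbsArctanLePi (u : ℝ) : |Real.arctan u| ≤ Real.pi / 2 :=
  abs_le.2 ⟨(Real.neg_pi_div_two_lt_arctan u).le, (Real.arctan_lt_pi_div_two u).le⟩

lemma myIntInt {f : ℝ → ℝ} {C A B : ℝ} (hm : Measurable f)
    (hb : ∀ x ∈ Set.uIoc A B, |f x| ≤ C) : IntervalIntegrable f volume A B := by
  rw [intervalIntegrable_iff]
  exact Integrable.mono' (integrableOn_const measure_Ioc_lt_top.ne)
    hm.aestronglyMeasurable ((ae_restrict_iff' measurableSet_uIoc).2 (ae_of_all _ hb))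

lemma myTanMeasurable : Measurable Real.tan := by
  have : Real.tan = fun x => Real.sin x / Real.cos x := funext fun x => Real.tan_eq_sin_div_cos x
  rw [this]; exact Real.measurable_sin.div Real.measurable_cos

set_option maxHeartbeats 1000000 in
/-- Rybkin's estimate for the `L¹` norm of the boundary argument contribution of a
single Blaschke factor with zero of modulus `a` and argument `θ₀`. -/
theorem rybkin_estimate (a θ₀ : ℝ) (ha : a ∈ Set.Ioo (0:ℝ) 1)
    (hθ₀ : θ₀ ∈ Set.Ico (0:ℝ) (2 * Real.pi)) :
    (1 / (2 * Real.pi)) *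
      ∫ θ in (0:ℝ)..(2 * Real.pi),
        |2 * Real.arctan ((1 - a) / ((1 + a) * Real.tan ((θ - θ₀) / 2)))| ≤
    (2 + Real.log (2 * Real.pi ^ 2)) * (1 - a) +
      2 * (1 - a) * Real.log (1 / (1 - a)) := by
  obtain ⟨ha0, ha1⟩ := ha
  have pi_pos := Real.pi_pos
  have pi_gt : (3.141592 : ℝ) < Real.pi := Real.pi_gt_d6
  have pi_lt : Real.pi < 3.15 := Real.pi_lt_d2
  have h1a : (0:ℝ) < 1 + a := by linarith
  set b : ℝ := (1 - a) / (1 + a) with hbdef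
  have hb0 : 0 < b := div_pos (by linarith) h1a
  have hbs : b ≤ 1 - a := by
    rw [hbdef, div_le_iff₀ h1a]; nlinarith
  have hb1 : b < 1 := lt_of_le_of_lt hbs (by linarith)
  set F : ℝ → ℝ := fun x => |2 * Real.arctan ((1 - a) / ((1 + a) * Real.tan (x / 2)))|
    with hFdef
  have hFm : Measurable F := by
    apply Measurable.abs
    apply Measurable.const_mul
    exact Real.measurable_arctan.comp
      (Measurable.div measurable_const
        (measurable_const.mul (myTanMeasurable.comp (measurable_id.div_const 2))))
  have hFb : ∀ x, |F x| ≤ Real.pi := by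
    intro x
    rw [abs_abs]
    have h := myAbsArctanLePi ((1 - a) / ((1 + a) * Real.tan (x / 2)))
    show |2 * Real.arctan ((1 - a) / ((1 + a) * Real.tan (x / 2)))| ≤ Real.pi
    rw [abs_mul, abs_two]
    linarith
  have hFnn : ∀ x, 0 ≤ F x := fun x => abs_nonneg _
  -- periodicity and shift
  have hper : Function.Periodic F (2 * Real.pi) := by
    intro x
    simp only [hFdef]
    rw [show (x + 2 * Real.pi) / 2 = x / 2 + Real.pi by ring, Real.tan_add_pi]
  have hshift : (∫ θ in (0:ℝ)..(2 * Real.pi),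
        |2 * Real.arctan ((1 - a) / ((1 + a) * Real.tan ((θ - θ₀) / 2)))|)
      = ∫ θ in (0:ℝ)..(2 * Real.pi), F θ := by
    have h1 : (∫ θ in (0:ℝ)..(2 * Real.pi),
        |2 * Real.arctan ((1 - a) / ((1 + a) * Real.tan ((θ - θ₀) / 2)))|)
        = ∫ θ in (0:ℝ)..(2 * Real.pi), F (θ - θ₀) := rfl
    rw [h1, intervalIntegral.integral_comp_sub_right F θ₀]
    have h := hper.intervalIntegral_add_eq (0 - θ₀) 0
    rw [show 0 - θ₀ + 2 * Real.pi = 2 * Real.pi - θ₀ by ring, zero_add] at h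
    exact h
  -- the comparison function
  set g1 : ℝ → ℝ := fun x => min Real.pi (4 * b / x) with hg1def
  have hg1m : Measurable g1 := measurable_const.min (measurable_const.div measurable_id)
  have hg1nn : ∀ x, 0 ≤ x → 0 ≤ g1 x := fun x hx =>
    le_min pi_pos.le (div_nonneg (by positivity) hx)
  have hg1le : ∀ x, g1 x ≤ Real.pi := fun x => min_le_left _ _
  -- key pointwise estimate
  have key : ∀ y : ℝ, 0 < y → y < Real.pi / 2 →
      |2 * Real.arctan ((1 - a) / ((1 + a) * Real.tan y))| ≤ min Real.pi (2 * b / y) := by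
    intro y hy0 hy2
    have hty : y < Real.tan y := Real.lt_tan hy0 hy2
    have hty0 : 0 < Real.tan y := lt_trans hy0 hty
    refine le_min ?_ ?_
    · have h := myAbsArctanLePi ((1 - a) / ((1 + a) * Real.tan y))
      rw [abs_mul, abs_two]; linarith
    · have h1 := myAbsArctanLe ((1 - a) / ((1 + a) * Real.tan y))
      have h2 : |(1 - a) / ((1 + a) * Real.tan y)| = b / Real.tan y := by
        rw [abs_div, abs_of_nonneg (by linarith : (0:ℝ) ≤ 1 - a),
          abs_of_pos (mul_pos h1a hty0), hbdef, div_div]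
      have h3 : b / Real.tan y ≤ b / y := by gcongr <;> linarith
      rw [h2] at h1
      rw [abs_mul, abs_two]
      have e : 2 * b / y = 2 * (b / y) := by ring
      rw [e]
      linarith
  -- pointwise bound on [0, 2π]
  have hpt : ∀ θ ∈ Set.Icc (0:ℝ) (2 * Real.pi),
      F θ ≤ g1 θ + g1 (2 * Real.pi - θ) := by
    rintro θ ⟨h0, h2⟩
    rcases eq_or_lt_of_le h0 with rfl | h0'
    · have : F 0 = 0 := by simp [hFdef]
      rw [this]
      have := hg1nn 0 le_rfl
      have := hg1nn (2 * Real.pi - 0) (by linarith)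
      linarith
    rcases lt_trichotomy θ Real.pi with hlt | heq | hgt
    · have h := key (θ / 2) (by linarith) (by linarith)
      have e : 2 * b / (θ / 2) = 4 * b / θ := by
        rw [div_div_eq_mul_div]; ring_nf
      calc F θ ≤ min Real.pi (2 * b / (θ / 2)) := h
        _ = g1 θ := by rw [e]
        _ ≤ g1 θ + g1 (2 * Real.pi - θ) := le_add_of_nonneg_right (hg1nn _ (by linarith))
    · subst heq
      have : F Real.pi = 0 := by
        simp [hFdef, Real.tan_pi_div_two]
      rw [this]
      have := hg1nn Real.pi pi_pos.le
      have := hg1nn (2 * Real.pi - Real.pi) (by linarith)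
      linarith
    · rcases eq_or_lt_of_le h2 with rfl | h2'
      · have : F (2 * Real.pi) = 0 := by
          have : (2 * Real.pi) / 2 = Real.pi := by ring
          simp [hFdef, this, Real.tan_pi]
        rw [this]
        have := hg1nn (2 * Real.pi) (by linarith)
        have := hg1nn (2 * Real.pi - 2 * Real.pi) (by linarith)
        linarith
      · set y : ℝ := (2 * Real.pi - θ) / 2 with hydef
        have hy0 : 0 < y := by rw [hydef]; linarith
        have hy2 : y < Real.pi / 2 := by rw [hydef]; linarith
        have htan : Real.tan (θ / 2) = -Real.tan y := by
          rw [show θ / 2 = Real.pi - y by rw [hydef]; ring, Real.tan_pi_sub]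
        have hFθ : F θ = |2 * Real.arctan ((1 - a) / ((1 + a) * Real.tan y))| := by
          simp only [hFdef]
          rw [htan, show (1 + a) * -Real.tan y = -((1 + a) * Real.tan y) by ring,
            div_neg, Real.arctan_neg, mul_neg, abs_neg]
        have h := key y hy0 hy2
        have e : 2 * b / y = 4 * b / (2 * Real.pi - θ) := by
          rw [hydef, div_div_eq_mul_div]; ring_nf
        rw [hFθ]
        calc |2 * Real.arctan ((1 - a) / ((1 + a) * Real.tan y))|
            ≤ min Real.pi (2 * b / y) := h
          _ = g1 (2 * Real.pi - θ) := by rw [e]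
          _ ≤ g1 θ + g1 (2 * Real.pi - θ) := le_add_of_nonneg_left (hg1nn θ (by linarith))
  -- integrability
  have hFint : IntervalIntegrable F volume 0 (2 * Real.pi) := myIntInt hFm fun x _ => hFb x
  have hGm : Measurable (fun θ => g1 θ + g1 (2 * Real.pi - θ)) :=
    hg1m.add (hg1m.comp (measurable_const.sub measurable_id))
  have hGint : IntervalIntegrable (fun θ => g1 θ + g1 (2 * Real.pi - θ)) volume 0 (2 * Real.pi) := by
    apply myIntInt (C := 2 * Real.pi) hGm
    intro x hx
    rw [Set.uIoc_of_le (by linarith)] at hx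
    have h1 := hg1nn x hx.1.le
    have h2 := hg1nn (2 * Real.pi - x) (by linarith [hx.2])
    have h3 := hg1le x
    have h4 := hg1le (2 * Real.pi - x)
    rw [abs_of_nonneg (by linarith)]
    linarith
  -- compare
  have hcomp : (∫ θ in (0:ℝ)..(2 * Real.pi), F θ)
      ≤ ∫ θ in (0:ℝ)..(2 * Real.pi), (g1 θ + g1 (2 * Real.pi - θ)) :=
    intervalIntegral.integral_mono_on (by linarith) hFint hGint hpt
  -- split the comparison integral
  have hg1int_a : IntervalIntegrable g1 volume 0 (2 * Real.pi) := by
    apply myIntInt (C := Real.pi) hg1m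
    intro x hx
    rw [Set.uIoc_of_le (by linarith)] at hx
    rw [abs_of_nonneg (hg1nn x hx.1.le)]
    exact hg1le x
  have hg1m2 : Measurable (fun θ : ℝ => g1 (2 * Real.pi - θ)) := by
    exact hg1m.comp (measurable_const.sub measurable_id)
  have hg1int_b : IntervalIntegrable (fun θ => g1 (2 * Real.pi - θ)) volume 0 (2 * Real.pi) := by
    apply myIntInt (C := Real.pi) hg1m2
    intro x hx
    rw [Set.uIoc_of_le (by linarith)] at hx
    rw [abs_of_nonneg (hg1nn _ (by linarith [hx.2]))]
    exact hg1le _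
  have hsplit : (∫ θ in (0:ℝ)..(2 * Real.pi), (g1 θ + g1 (2 * Real.pi - θ)))
      = (∫ θ in (0:ℝ)..(2 * Real.pi), g1 θ) + ∫ θ in (0:ℝ)..(2 * Real.pi), g1 (2 * Real.pi - θ) :=
    intervalIntegral.integral_add hg1int_a hg1int_b
  have hrefl : (∫ θ in (0:ℝ)..(2 * Real.pi), g1 (2 * Real.pi - θ))
      = ∫ θ in (0:ℝ)..(2 * Real.pi), g1 θ := by
    rw [intervalIntegral.integral_comp_sub_left g1 (2 * Real.pi)]
    norm_num
  -- compute the bound for ∫ g1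
  set c : ℝ := 4 * b / Real.pi with hcdef
  have hc0 : 0 < c := by positivity
  have hc2 : c < 2 * Real.pi := by
    rw [hcdef, div_lt_iff₀ pi_pos]; nlinarith
  have hint1 : IntervalIntegrable g1 volume 0 c := by
    apply myIntInt (C := Real.pi) hg1m
    intro x hx
    rw [Set.uIoc_of_le hc0.le] at hx
    rw [abs_of_nonneg (hg1nn x hx.1.le)]
    exact hg1le x
  have hint2 : IntervalIntegrable g1 volume c (2 * Real.pi) := by
    apply myIntInt (C := Real.pi) hg1m
    intro x hx
    rw [Set.uIoc_of_le hc2.le] at hx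
    rw [abs_of_nonneg (hg1nn x (by linarith [hx.1]))]
    exact hg1le x
  have Ia : (∫ x in (0:ℝ)..c, g1 x) ≤ Real.pi * c := by
    calc (∫ x in (0:ℝ)..c, g1 x) ≤ ∫ _ in (0:ℝ)..c, Real.pi :=
          intervalIntegral.integral_mono_on hc0.le hint1 intervalIntegrable_const
            (fun x _ => hg1le x)
      _ = Real.pi * c := by rw [intervalIntegral.integral_const]; simp [mul_comm]
  have hcont2 : IntervalIntegrable (fun x : ℝ => 4 * b / x) volume c (2 * Real.pi) := by
    apply ContinuousOn.intervalIntegrable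
    apply ContinuousOn.div continuousOn_const continuousOn_id
    intro x hx
    rw [Set.uIcc_of_le hc2.le] at hx
    exact ne_of_gt (lt_of_lt_of_le hc0 hx.1)
  have Ib : (∫ x in c..(2 * Real.pi), g1 x) ≤ 4 * b * Real.log (2 * Real.pi / c) := by
    calc (∫ x in c..(2 * Real.pi), g1 x) ≤ ∫ x in c..(2 * Real.pi), 4 * b / x :=
          intervalIntegral.integral_mono_on hc2.le hint2 hcont2 (fun x _ => min_le_right _ _)
      _ = ∫ x in c..(2 * Real.pi), (4 * b) * (1 / x) := by
          apply intervalIntegral.integral_congr; intro x _; ring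
      _ = (4 * b) * ∫ x in c..(2 * Real.pi), (1 / x) := intervalIntegral.integral_const_mul _ _
      _ = 4 * b * Real.log (2 * Real.pi / c) := by
          rw [integral_one_div]
          rw [Set.uIcc_of_le hc2.le]
          rintro ⟨hle, -⟩
          linarith
  have hg1total : (∫ θ in (0:ℝ)..(2 * Real.pi), g1 θ)
      ≤ Real.pi * c + 4 * b * Real.log (2 * Real.pi / c) := by
    rw [← intervalIntegral.integral_add_adjacent_intervals hint1 hint2]
    linarith
  -- assemble
  have hpc : Real.pi * c = 4 * b := by
    rw [hcdef]; field_simp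
  have hlogarg : 2 * Real.pi / c = Real.pi ^ 2 / (2 * b) := by
    rw [hcdef]; field_simp; ring
  have hItotal : (∫ θ in (0:ℝ)..(2 * Real.pi),
        |2 * Real.arctan ((1 - a) / ((1 + a) * Real.tan ((θ - θ₀) / 2)))|)
      ≤ 8 * b + 8 * b * Real.log (Real.pi ^ 2 / (2 * b)) := by
    rw [hshift]
    have := hcomp
    rw [hsplit, hrefl] at this
    rw [hpc, hlogarg] at hg1total
    linarith
  -- final arithmetic
  set L2 := Real.log 2 with hL2def
  set LP := Real.log Real.pi with hLPdef
  set Ls := Real.log (1 - a) with hLsdef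
  set LA := Real.log (1 + a) with hLAdef
  have hlogb : Real.log b = Ls - LA := Real.log_div (by linarith) (by linarith)
  have hlogE : Real.log (Real.pi ^ 2 / (2 * b)) = 2 * LP - L2 - (Ls - LA) := by
    rw [Real.log_div (by positivity) (by positivity), Real.log_mul two_ne_zero hb0.ne',
      Real.log_pow, hlogb]
    push_cast; ring
  have hlogR : Real.log (2 * Real.pi ^ 2) = L2 + 2 * LP := by
    rw [Real.log_mul two_ne_zero (by positivity), Real.log_pow]
    push_cast; ring
  have hlogS : Real.log (1 / (1 - a)) = -Ls := by
    rw [one_div, Real.log_inv]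
  rw [hlogR, hlogS]
  -- numeric bounds
  have hL2l : (0.6931 : ℝ) < L2 := lt_trans (by norm_num) Real.log_two_gt_d9
  have hL2u : L2 < 0.6932 := lt_trans Real.log_two_lt_d9 (by norm_num)
  have hLP0 : 0 ≤ LP := Real.log_nonneg (by linarith)
  have hLPl : L2 ≤ LP := Real.log_le_log (by norm_num) (by linarith)
  have hLPu : LP ≤ 2 * L2 := by
    have h4 : LP ≤ Real.log 4 := Real.log_le_log pi_pos (by linarith)
    have : Real.log 4 = 2 * L2 := by
      rw [show (4:ℝ) = 2 ^ 2 by norm_num, Real.log_pow]; push_cast; ring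
    linarith
  have hLs : Ls < 0 := Real.log_neg (by linarith) (by linarith)
  have hLA1 : 0 ≤ LA := Real.log_nonneg (by linarith)
  have hLA2 : LA ≤ L2 := Real.log_le_log (by linarith) (by linarith)
  -- put it together
  have hE : 0 ≤ 2 * LP - L2 - (Ls - LA) := by linarith
  have step1 : (1 / (2 * Real.pi)) *
      (∫ θ in (0:ℝ)..(2 * Real.pi),
        |2 * Real.arctan ((1 - a) / ((1 + a) * Real.tan ((θ - θ₀) / 2)))|)
      ≤ (1 / (2 * Real.pi)) * (8 * b + 8 * b * (2 * LP - L2 - (Ls - LA))) := by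
    apply mul_le_mul_of_nonneg_left _ (by positivity)
    rw [← hlogE]
    exact hItotal
  refine le_trans step1 ?_
  rw [one_div, inv_mul_le_iff₀ (by positivity)]
  -- now pure inequality
  have hs0 : (0:ℝ) < 1 - a := by linarith
  have h1 : b * (1 + (2 * LP - L2 - (Ls - LA))) ≤ (1 - a) * (1 + 2 * LP - Ls) := by
    have hXY : 1 + (2 * LP - L2 - (Ls - LA)) ≤ 1 + 2 * LP - Ls := by linarith
    have hX0 : 0 ≤ 1 + (2 * LP - L2 - (Ls - LA)) := by linarith
    calc b * (1 + (2 * LP - L2 - (Ls - LA))) ≤ (1 - a) * (1 + (2 * LP - L2 - (Ls - LA))) :=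
          mul_le_mul_of_nonneg_right hbs hX0
      _ ≤ (1 - a) * (1 + 2 * LP - Ls) := mul_le_mul_of_nonneg_left hXY hs0.le
  have hscalar : 4 * (1 + 2 * LP) ≤ Real.pi * (2 + L2 + 2 * LP) := by
    nlinarith [mul_nonneg (by linarith : (0:ℝ) ≤ Real.pi - 3.141592)
      (by linarith : (0:ℝ) ≤ 2 + L2 + 2 * LP)]
  have h2 : 4 * ((1 - a) * (1 + 2 * LP)) ≤ Real.pi * ((1 - a) * (2 + L2 + 2 * LP)) := by
    nlinarith [mul_le_mul_of_nonneg_left hscalar hs0.le]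
  have h3 : 4 * ((1 - a) * (-Ls)) ≤ Real.pi * (2 * (1 - a) * (-Ls)) := by
    have hnn : 0 ≤ (1 - a) * (-Ls) := mul_nonneg hs0.le (by linarith)
    nlinarith
  nlinarith [h1, h2, h3]
end

section
/- Let f_n : 𝔻 → 𝔻 be inner functions with f_n(0) = 0 and f_n'(0) > 0 for all n, and suppose F_n := f_n ∘ ⋯ ∘ f_1 converges locally uniformly to a non-constant F. Then for Lebesgue-a.e. θ ∈ [0, 2π), the boundary values satisfy f̂_n(e^{iθ})/e^{iθ} → 1 as n → ∞. -/
open MeasureTheory Filter Set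

namespace BVTI
open Metric

lemma mobius_norm_le {a : ℝ} (ha0 : 0 ≤ a) (ha1 : a ≤ 1) {w : ℂ} (hw : ‖w‖ ≤ 1) :
    ‖(a : ℂ) - w‖ ≤ ‖1 - (a : ℂ) * w‖ := by
  have h1 : Complex.normSq w ≤ 1 := by
    have h := Complex.sq_norm w
    nlinarith [norm_nonneg w]
  rw [Complex.norm_def, Complex.norm_def]
  apply Real.sqrt_le_sqrt
  simp only [Complex.normSq_apply, Complex.sub_re, Complex.sub_im, Complex.mul_re,
    Complex.mul_im, Complex.one_re, Complex.one_im, Complex.ofReal_re, Complex.ofReal_im]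
  simp only [Complex.normSq_apply] at h1
  nlinarith [sq_nonneg w.re, sq_nonneg w.im, mul_nonneg (mul_nonneg ha0 ha0)
    (sub_nonneg.2 h1), mul_nonneg (sub_nonneg.2 ha1) (sub_nonneg.2 h1)]

lemma schwarz_norm_le {g : ℂ → ℂ} (hd : DifferentiableOn ℂ g (ball (0:ℂ) 1))
    (hm : MapsTo g (ball (0:ℂ) 1) (ball (0:ℂ) 1)) (h0 : g 0 = 0) {z : ℂ}
    (hz : z ∈ ball (0:ℂ) 1) : ‖g z‖ ≤ ‖z‖ := by
  have := Complex.norm_le_norm_of_mapsTo_ball hd (hm.mono_right ball_subset_closedBall) h0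
    (by simpa using mem_ball_zero_iff.1 hz)
  simpa using this

lemma norm_le_of_mapsTo_closed {h : ℂ → ℂ} (hd : DifferentiableOn ℂ h (ball (0:ℂ) 1))
    (hm : ∀ w ∈ ball (0:ℂ) 1, ‖h w‖ ≤ 1) (h0 : h 0 = 0) {z : ℂ}
    (hz : z ∈ ball (0:ℂ) 1) : ‖h z‖ ≤ ‖z‖ := by
  have key : ∀ ε : ℝ, 0 < ε → ‖h z‖ ≤ (1 + ε) * ‖z‖ := by
    intro ε hε
    have hmaps : MapsTo h (ball (0:ℂ) 1) (ball (h 0) (1 + ε)) := by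
      intro w hw
      rw [h0, mem_ball_zero_iff]
      exact lt_of_le_of_lt (hm w hw) (by linarith)
    have := Complex.dist_le_div_mul_dist_of_mapsTo_ball hd (hmaps.mono_right ball_subset_closedBall) hz
    simpa [h0, dist_zero_right, div_one] using this
  rcases eq_or_ne z 0 with rfl | hz0
  · simp [h0]
  · refine le_of_forall_pos_le_add fun ε hε => ?_
    have hz0' : 0 < ‖z‖ := norm_pos_iff.2 hz0
    calc ‖h z‖ ≤ (1 + ε / ‖z‖) * ‖z‖ := key _ (by positivity)
      _ = ‖z‖ + ε := by rw [add_mul, one_mul, div_mul_cancel₀ _ hz0'.ne']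

set_option maxHeartbeats 1000000 in
lemma refined_schwarz {g : ℂ → ℂ} (hd : DifferentiableOn ℂ g (ball (0:ℂ) 1))
    (hm : MapsTo g (ball (0:ℂ) 1) (ball (0:ℂ) 1)) (h0 : g 0 = 0) {a : ℝ}
    (hda : deriv g 0 = (a : ℂ)) (ha0 : 0 ≤ a) {z : ℂ} (hz : z ∈ ball (0:ℂ) 1) :
    ‖g z‖ * (1 + a * ‖z‖) ≤ ‖z‖ * (‖z‖ + a) := by
  have ha1 : a ≤ 1 := by
    have := Complex.norm_deriv_le_one_of_mapsTo_ball hd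
      (by rw [h0]; exact hm.mono_right ball_subset_closedBall) one_pos
    rw [hda] at this
    simpa [abs_of_nonneg ha0] using this
  rcases eq_or_ne z 0 with rfl | hz0
  · simp [h0]
  have hz1 : ‖z‖ < 1 := mem_ball_zero_iff.1 hz
  have hzpos : 0 < ‖z‖ := norm_pos_iff.2 hz0
  rcases ha1.lt_or_eq with ha1' | rfl
  swap
  · have := schwarz_norm_le hd hm h0 hz
    nlinarith [norm_nonneg (g z), norm_nonneg z]
  -- main case a < 1
  set G := dslope g 0 with hG
  have hGd : DifferentiableOn ℂ G (ball (0:ℂ) 1) :=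
    (Complex.differentiableOn_dslope (ball_mem_nhds 0 one_pos)).2 hd
  have hG0 : G 0 = (a : ℂ) := by rw [hG, dslope_same, hda]
  have hm' : MapsTo g (ball (0:ℂ) 1) (ball (g 0) 1) := by rwa [h0]
  have hG1 : ∀ w ∈ ball (0:ℂ) 1, ‖G w‖ ≤ 1 := fun w hw => by
    simpa using Complex.norm_dslope_le_div_of_mapsTo_ball hd (hm'.mono_right ball_subset_closedBall) hw
  set h : ℂ → ℂ := fun w => ((a:ℂ) - G w) / (1 - (a:ℂ) * G w) with hh
  have hden : ∀ w ∈ ball (0:ℂ) 1, 1 - (a:ℂ) * G w ≠ 0 := by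
    intro w hw hcon
    rw [sub_eq_zero] at hcon
    have h2 : ‖(1:ℂ)‖ = ‖(a:ℂ)‖ * ‖G w‖ := by rw [hcon, norm_mul]
    have h3 : ‖(a:ℂ)‖ = a := by simp [abs_of_nonneg ha0]
    rw [h3, norm_one] at h2
    nlinarith [hG1 w hw, norm_nonneg (G w)]
  have hhd : DifferentiableOn ℂ h (ball (0:ℂ) 1) := by
    apply DifferentiableOn.div
    · exact (differentiableOn_const _).sub hGd
    · exact (differentiableOn_const _).sub ((differentiableOn_const _).mul hGd)
    · exact hden
  have hh0 : h 0 = 0 := by simp [hh, hG0]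
  have hhm : ∀ w ∈ ball (0:ℂ) 1, ‖h w‖ ≤ 1 := by
    intro w hw
    rw [hh]
    simp only [norm_div]
    have := mobius_norm_le ha0 ha1 (hG1 w hw)
    have hpos : 0 < ‖1 - (a:ℂ) * G w‖ := norm_pos_iff.2 (hden w hw)
    rw [div_le_one hpos]
    exact this
  have hkey : ‖h z‖ ≤ ‖z‖ := norm_le_of_mapsTo_closed hhd hhm hh0 hz
  have hpos : 0 < ‖1 - (a:ℂ) * G z‖ := norm_pos_iff.2 (hden z hz)
  have h2 : ‖(a:ℂ) - G z‖ ≤ ‖z‖ * ‖1 - (a:ℂ) * G z‖ := by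
    rw [hh] at hkey
    simp only [norm_div] at hkey
    calc ‖(a:ℂ) - G z‖ = ‖(a:ℂ) - G z‖ / ‖1 - (a:ℂ) * G z‖ * ‖1 - (a:ℂ) * G z‖ :=
          (div_mul_cancel₀ _ hpos.ne').symm
      _ ≤ ‖z‖ * ‖1 - (a:ℂ) * G z‖ := by
          exact mul_le_mul_of_nonneg_right hkey hpos.le
  -- squared version
  have h3 : ‖(a:ℂ) - G z‖^2 ≤ ‖z‖^2 * ‖1 - (a:ℂ) * G z‖^2 := by
    nlinarith [norm_nonneg ((a:ℂ) - G z), norm_nonneg z, hpos.le,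
      mul_nonneg (norm_nonneg z) hpos.le]
  have e1 : ‖(a:ℂ) - G z‖^2 = a^2 - 2*a*(G z).re + Complex.normSq (G z) := by
    rw [Complex.sq_norm]
    simp only [Complex.normSq_apply, Complex.sub_re, Complex.sub_im, Complex.ofReal_re,
      Complex.ofReal_im]
    ring
  have e2 : ‖1 - (a:ℂ) * G z‖^2 = 1 - 2*a*(G z).re + a^2 * Complex.normSq (G z) := by
    rw [Complex.sq_norm]
    simp only [Complex.normSq_apply, Complex.sub_re, Complex.sub_im, Complex.mul_re,
      Complex.mul_im, Complex.one_re, Complex.one_im, Complex.ofReal_re, Complex.ofReal_im]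
    ring
  have hx2 : Complex.normSq (G z) = ‖G z‖^2 := by
    rw [Complex.sq_norm]
  set x := ‖G z‖ with hxdef
  set t := ‖z‖ with htdef
  have hx1 : x ≤ 1 := hG1 z hz
  have hx0 : 0 ≤ x := norm_nonneg _
  have hre : (G z).re ≤ x := by
    calc (G z).re ≤ |(G z).re| := le_abs_self _
      _ ≤ ‖G z‖ := Complex.abs_re_le_norm _
      _ = x := by rw [hxdef]
  rw [e1, e2, hx2] at h3
  -- derive x * (1 + a*t) ≤ t + a
  have hquad : x^2*(1 - t^2*a^2) - 2*a*(1-t^2)*x - (t^2 - a^2) ≤ 0 := by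
    have ht2 : t^2 ≤ 1 := by nlinarith
    have hco : 0 ≤ 2*a*(1 - t^2) := by nlinarith [mul_nonneg ha0 (sub_nonneg.2 ht2)]
    nlinarith [mul_le_mul_of_nonneg_left hre hco]
  have hfact : (x*(1+a*t) - (a+t)) * (x*(1-a*t) - (a-t)) ≤ 0 := by nlinarith [hquad]
  have hxat : x * (1 + a*t) ≤ t + a := by
    by_contra hgt
    push_neg at hgt
    have hP : 0 < x*(1+a*t) - (a+t) := by linarith
    have hQ : x*(1-a*t) - (a-t) ≤ 0 := by
      by_contra hQ'
      push_neg at hQ'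
      nlinarith [mul_pos hP hQ']
    have hax : a * x ≤ a := by nlinarith [mul_le_mul_of_nonneg_left hx1 ha0]
    nlinarith [mul_le_mul_of_nonneg_right hax hzpos.le,
      mul_nonneg (sub_nonneg.2 ha1) hzpos.le]
  -- conclude
  have hGz : G z = g z / z := by
    rw [hG, dslope_of_ne _ hz0, slope_def_field, h0, sub_zero, sub_zero]
  have hgz : ‖g z‖ = x * t := by
    rw [hxdef, hGz, norm_div, htdef, div_mul_cancel₀ _ (norm_ne_zero_iff.2 hz0)]
  rw [hgz]
  nlinarith [mul_le_mul_of_nonneg_left hxat hzpos.le]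

end BVTI


theorem boundary_values_tend_to_identity
    (f : ℕ → ℂ → ℂ) (fhat : ℕ → ℂ → ℂ) (F : ℂ → ℂ) (c : ℕ → ℝ)
    (hf : ∀ n, 1 ≤ n → IsInner (f n))
    (hf0 : ∀ n, 1 ≤ n → f n 0 = 0)
    (hderiv : ∀ n, 1 ≤ n → deriv (f n) 0 = (c n : ℂ))
    (hpos : ∀ n, 1 ≤ n → 0 < c n)
    -- `fhat n` is the boundary extension of `f n`:
    (hfhat : ∀ n, 1 ≤ n → ∀ᵐ (θ : ℝ) ∂(volume.restrict (Set.Ico (0:ℝ) (2 * Real.pi))),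
      Filter.Tendsto (fun r : ℝ => f n ((r : ℂ) * Complex.exp ((θ : ℂ) * Complex.I)))
        (nhdsWithin 1 (Set.Iio 1))
        (nhds (fhat n (Complex.exp ((θ : ℂ) * Complex.I)))))
    (hconv : TendstoLocallyUniformlyOn (fun n => fwdComp f n) F atTop (Metric.ball 0 1))
    (hFnc : ¬ ∃ a : ℂ, Set.EqOn F (fun _ => a) (Metric.ball 0 1)) :
    ∀ᵐ (θ : ℝ) ∂(volume.restrict (Set.Ico (0:ℝ) (2 * Real.pi))),
      Filter.Tendsto
        (fun n : ℕ => fhat n (Complex.exp ((θ : ℂ) * Complex.I)) /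
          Complex.exp ((θ : ℂ) * Complex.I))
        atTop (nhds 1) := by
  classical
  have hfd : ∀ n, 1 ≤ n → DifferentiableOn ℂ (f n) (Metric.ball 0 1) := fun n hn => (hf n hn).1
  have hfm : ∀ n, 1 ≤ n → Set.MapsTo (f n) (Metric.ball 0 1) (Metric.ball 0 1) :=
    fun n hn => (hf n hn).2.1
  have hc1 : ∀ n, 1 ≤ n → c n ≤ 1 := by
    intro n hn
    have := Complex.norm_deriv_le_one_of_mapsTo_ball (hfd n hn)
      (by rw [hf0 n hn]; exact (hfm n hn).mono_right Metric.ball_subset_closedBall) one_pos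
    rw [hderiv n hn] at this
    simpa [abs_of_nonneg (hpos n hn).le] using this
  set d : ℕ → ℝ := fun n => if 1 ≤ n then 1 - c n else 0 with hd_def
  have hd0 : ∀ n, 0 ≤ d n := by
    intro n
    by_cases hn : 1 ≤ n
    · simp only [hd_def, if_pos hn]; linarith [hc1 n hn]
    · simp [hd_def, hn]
  have hmem : ∀ z ∈ Metric.ball (0:ℂ) 1, ∀ n, fwdComp f n z ∈ Metric.ball (0:ℂ) 1 := by
    intro z hz n
    induction n with
    | zero => simpa [fwdComp] using hz
    | succ k ih =>
        have hrw : fwdComp f (k+1) z = f (k+1) (fwdComp f k z) := rfl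
        rw [hrw]; exact hfm (k+1) (by omega) ih
  -- Step 1: summability of (1 - c n)
  have hsum : Summable d := by
    by_contra hns
    have hT : Filter.Tendsto (fun n => ∑ i ∈ Finset.range n, d i) Filter.atTop Filter.atTop :=
      (not_summable_iff_tendsto_nat_atTop_of_nonneg hd0).1 hns
    have hzero : ∀ z ∈ Metric.ball (0:ℂ) 1,
        Filter.Tendsto (fun n => fwdComp f n z) Filter.atTop (nhds 0) := by
      intro z hz
      have hρ1 : ‖z‖ < 1 := mem_ball_zero_iff.1 hz
      have hρ0 : 0 ≤ ‖z‖ := norm_nonneg z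
      have hrle : ∀ n, ‖fwdComp f n z‖ ≤ ‖z‖ := by
        intro n
        induction n with
        | zero => simp [fwdComp]
        | succ k ih =>
          have hrw : fwdComp f (k+1) z = f (k+1) (fwdComp f k z) := rfl
          rw [hrw]
          exact le_trans (BVTI.schwarz_norm_le (hfd (k+1) (by omega)) (hfm (k+1) (by omega))
            (hf0 (k+1) (by omega)) (hmem z hz k)) ih
      have hstep : ∀ n, ‖fwdComp f (n+1) z‖ ≤ ‖fwdComp f n z‖ *
          Real.exp (-((1 - ‖z‖)/2 * (1 - c (n+1)))) := by
        intro n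
        have hwmem := hmem z hz n
        set w := fwdComp f n z with hw
        have hw1 : ‖w‖ < 1 := mem_ball_zero_iff.1 hwmem
        have hw0 : 0 ≤ ‖w‖ := norm_nonneg w
        have hwle : ‖w‖ ≤ ‖z‖ := hrle n
        have hr := BVTI.refined_schwarz (hfd (n+1) (by omega)) (hfm (n+1) (by omega))
          (hf0 (n+1) (by omega)) (hderiv (n+1) (by omega)) (hpos (n+1) (by omega)).le hwmem
        have hcc1 : c (n+1) ≤ 1 := hc1 (n+1) (by omega)
        have hcc0 : 0 < c (n+1) := hpos (n+1) (by omega)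
        have hrw : ‖fwdComp f (n+1) z‖ = ‖f (n+1) w‖ := rfl
        rw [hrw]
        have hq : ‖w‖ + c (n+1) ≤ (1 + c (n+1) * ‖w‖) * (1 - (1 - c (n+1)) * (1 - ‖z‖)/2) := by
          have hccr : c (n+1) * ‖w‖ ≤ 1 := by
            nlinarith [mul_le_mul_of_nonneg_left hw1.le hcc0.le]
          nlinarith [mul_nonneg (sub_nonneg.2 hcc1) (sub_nonneg.2 hwle),
            mul_nonneg (mul_nonneg (sub_nonneg.2 hcc1) (by linarith : (0:ℝ) ≤ 1 - ‖z‖))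
              (sub_nonneg.2 hccr)]
        have hexp : 1 - (1 - c (n+1)) * (1 - ‖z‖)/2 ≤
            Real.exp (-((1 - ‖z‖)/2 * (1 - c (n+1)))) := by
          have h := Real.add_one_le_exp (-((1 - ‖z‖)/2 * (1 - c (n+1))))
          linarith
        have hpos1 : 0 < 1 + c (n+1) * ‖w‖ := by nlinarith [mul_nonneg hcc0.le hw0]
        have h5 : ‖f (n+1) w‖ * (1 + c (n+1) * ‖w‖) ≤
            (‖w‖ * Real.exp (-((1 - ‖z‖)/2 * (1 - c (n+1))))) * (1 + c (n+1) * ‖w‖) := by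
          have hA := mul_le_mul_of_nonneg_left hq hw0
          have hB := mul_le_mul_of_nonneg_left
            (mul_le_mul_of_nonneg_left hexp hpos1.le) hw0
          nlinarith [hr, hA, hB]
        exact le_of_mul_le_mul_right h5 hpos1
      have hbound : ∀ n, ‖fwdComp f n z‖ ≤
          ‖z‖ * Real.exp (-((1 - ‖z‖)/2 * ∑ i ∈ Finset.range n, (1 - c (i+1)))) := by
        intro n
        induction n with
        | zero => simp [fwdComp]
        | succ k ih =>
          calc ‖fwdComp f (k+1) z‖
              ≤ ‖fwdComp f k z‖ * Real.exp (-((1 - ‖z‖)/2 * (1 - c (k+1)))) := hstep k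
            _ ≤ (‖z‖ * Real.exp (-((1 - ‖z‖)/2 * ∑ i ∈ Finset.range k, (1 - c (i+1))))) *
                Real.exp (-((1 - ‖z‖)/2 * (1 - c (k+1)))) :=
                mul_le_mul_of_nonneg_right ih (Real.exp_pos _).le
            _ = ‖z‖ * Real.exp (-((1 - ‖z‖)/2 * ∑ i ∈ Finset.range (k+1), (1 - c (i+1)))) := by
                rw [Finset.sum_range_succ, mul_assoc, ← Real.exp_add]
                congr 2
                ring
      have hTT : Filter.Tendsto (fun n => ∑ i ∈ Finset.range n, (1 - c (i+1)))
          Filter.atTop Filter.atTop := by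
        have heq : ∀ n, ∑ i ∈ Finset.range n, (1 - c (i+1)) = ∑ i ∈ Finset.range (n+1), d i := by
          intro n
          rw [Finset.sum_range_succ']
          simp [hd_def]
        have : (fun n => ∑ i ∈ Finset.range n, (1 - c (i+1))) =
            (fun n => ∑ i ∈ Finset.range n, d i) ∘ (fun n => n + 1) := by
          funext n; exact heq n
        rw [this]
        exact hT.comp (Filter.tendsto_add_atTop_nat 1)
      have hE : Filter.Tendsto
          (fun n => ‖z‖ * Real.exp (-((1 - ‖z‖)/2 * ∑ i ∈ Finset.range n, (1 - c (i+1)))))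
          Filter.atTop (nhds 0) := by
        rw [show (0:ℝ) = ‖z‖ * 0 by ring]
        apply Filter.Tendsto.const_mul
        apply Real.tendsto_exp_atBot.comp
        apply Filter.tendsto_neg_atTop_atBot.comp
        exact hTT.const_mul_atTop (by linarith : (0:ℝ) < (1 - ‖z‖)/2)
      exact tendsto_zero_iff_norm_tendsto_zero.2
        (squeeze_zero (fun n => norm_nonneg _) hbound hE)
    exact hFnc ⟨0, fun z hz => tendsto_nhds_unique (hconv.tendsto_at hz) (hzero z hz)⟩
  -- Step 2: boundary integrals
  set μ := volume.restrict (Set.Ico (0:ℝ) (2 * Real.pi)) with hμdef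
  have hμuniv : μ Set.univ = ENNReal.ofReal (2 * Real.pi) := by
    rw [hμdef, Measure.restrict_apply_univ, Real.volume_Ico]
    norm_num
  haveI : IsFiniteMeasure μ := ⟨by rw [hμuniv]; exact ENNReal.ofReal_lt_top⟩
  set Q : ℕ → ℝ → ℂ := fun n θ => fhat n (Complex.exp ((θ:ℂ) * Complex.I)) /
    Complex.exp ((θ:ℂ) * Complex.I) with hQdef
  set rr : ℕ → ℝ := fun k => 1 - ((k:ℝ) + 2)⁻¹ with hrrdef
  have hrr0 : ∀ k, 0 < rr k := by
    intro k
    have h2 : ((k:ℝ) + 2)⁻¹ ≤ 2⁻¹ := by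
      apply inv_anti₀ (by norm_num)
      have : (0:ℝ) ≤ (k:ℝ) := Nat.cast_nonneg k
      linarith
    simp only [hrrdef]
    linarith
  have hrr1 : ∀ k, rr k < 1 := by
    intro k
    simp only [hrrdef]
    have : (0:ℝ) < ((k:ℝ) + 2)⁻¹ := by positivity
    linarith
  have hrrtend : Filter.Tendsto rr Filter.atTop (nhds 1) := by
    have h1 : Filter.Tendsto (fun k : ℕ => ((k:ℝ) + 2)⁻¹) Filter.atTop (nhds 0) := by
      apply tendsto_inv_atTop_zero.comp
      exact Filter.tendsto_atTop_add_const_right _ 2 tendsto_natCast_atTop_atTop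
    have h2 : Filter.Tendsto (fun k : ℕ => 1 - ((k:ℝ) + 2)⁻¹) Filter.atTop (nhds (1 - 0)) :=
      Filter.Tendsto.sub tendsto_const_nhds h1
    simpa [hrrdef] using h2
  have hrrW : Filter.Tendsto rr Filter.atTop (nhdsWithin 1 (Set.Iio 1)) :=
    tendsto_nhdsWithin_of_tendsto_nhds_of_eventually_within _ hrrtend
      (Filter.Eventually.of_forall fun k => hrr1 k)
  have key : ∀ n, 1 ≤ n → AEStronglyMeasurable (Q n) μ ∧
      ∫⁻ θ, ENNReal.ofReal (‖Q n θ - 1‖^2) ∂μ = ENNReal.ofReal (4 * Real.pi * (1 - c n)) := by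
    intro n hn
    set G := dslope (f n) 0 with hGdef
    have hGd : DifferentiableOn ℂ G (Metric.ball 0 1) :=
      (Complex.differentiableOn_dslope (Metric.ball_mem_nhds 0 one_pos)).2 (hfd n hn)
    have hGm : ∀ w ∈ Metric.ball (0:ℂ) 1, ‖G w‖ ≤ 1 := by
      intro w hw
      have hm' : Set.MapsTo (f n) (Metric.ball 0 1) (Metric.ball (f n 0) 1) := by
        rw [hf0 n hn]; exact hfm n hn
      simpa using Complex.norm_dslope_le_div_of_mapsTo_ball (hfd n hn) (hm'.mono_right Metric.ball_subset_closedBall) hw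
    have hcirc : ∀ k θ, circleMap 0 (rr k) θ ∈ Metric.ball (0:ℂ) 1 := by
      intro k θ
      rw [mem_ball_zero_iff, norm_circleMap_zero, abs_of_pos (hrr0 k)]
      exact hrr1 k
    have hφcont : ∀ k, Continuous (fun θ => G (circleMap 0 (rr k) θ)) := fun k =>
      hGd.continuousOn.comp_continuous (continuous_circleMap 0 (rr k)) (fun θ => hcirc k θ)
    have hφint : ∀ k, ∫ θ, G (circleMap 0 (rr k) θ) ∂μ = ((2 * Real.pi * c n : ℝ) : ℂ) := by
      intro k
      have hdc : DiffContOnCl ℂ G (Metric.ball 0 (rr k)) := by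
        apply DifferentiableOn.diffContOnCl
        rw [closure_ball (0:ℂ) (hrr0 k).ne']
        exact hGd.mono (Metric.closedBall_subset_ball (hrr1 k))
      have hC := hdc.circleIntegral_sub_inv_smul (Metric.mem_ball_self (hrr0 k))
      have hL : (∮ z in C(0, rr k), (z - 0)⁻¹ • G z) =
          Complex.I * ∫ θ in (0:ℝ)..(2*Real.pi), G (circleMap 0 (rr k) θ) := by
        rw [circleIntegral, ← intervalIntegral.integral_const_mul]
        apply intervalIntegral.integral_congr
        intro θ _
        simp only [deriv_circleMap, smul_eq_mul, sub_zero]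
        have hne : circleMap 0 (rr k) θ ≠ 0 := circleMap_ne_center (hrr0 k).ne'
        field_simp
      have hG0 : G 0 = ((c n : ℝ) : ℂ) := by rw [hGdef, dslope_same, hderiv n hn]
      rw [hL, hG0] at hC
      have h2 : ∫ θ in (0:ℝ)..(2*Real.pi), G (circleMap 0 (rr k) θ) =
          ((2*Real.pi*(c n) : ℝ) : ℂ) := by
        apply mul_left_cancel₀ Complex.I_ne_zero
        rw [hC]
        simp only [smul_eq_mul]
        push_cast
        ring
      calc ∫ θ, G (circleMap 0 (rr k) θ) ∂μ
          = ∫ θ in Set.Ioc (0:ℝ) (2*Real.pi), G (circleMap 0 (rr k) θ) := by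
            rw [hμdef, integral_Ico_eq_integral_Ioo, ← integral_Ioc_eq_integral_Ioo]
        _ = ∫ θ in (0:ℝ)..(2*Real.pi), G (circleMap 0 (rr k) θ) :=
            (intervalIntegral.integral_of_le (by positivity)).symm
        _ = ((2*Real.pi*(c n) : ℝ) : ℂ) := h2
    have hQlim : ∀ᵐ θ ∂μ, Filter.Tendsto (fun k => G (circleMap 0 (rr k) θ))
        Filter.atTop (nhds (Q n θ)) := by
      filter_upwards [hfhat n hn] with θ hθ
      have h1 : Filter.Tendsto (fun k => f n ((rr k : ℂ) * Complex.exp ((θ:ℂ) * Complex.I)))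
          Filter.atTop (nhds (fhat n (Complex.exp ((θ:ℂ) * Complex.I)))) := hθ.comp hrrW
      have h2 : Filter.Tendsto (fun k => ((rr k : ℝ) : ℂ) * Complex.exp ((θ:ℂ) * Complex.I))
          Filter.atTop (nhds (Complex.exp ((θ:ℂ) * Complex.I))) := by
        have h3 := (Complex.continuous_ofReal.tendsto 1).comp hrrtend
        have h4 := h3.mul_const (Complex.exp ((θ:ℂ) * Complex.I))
        simpa using h4
      have h3 := h1.div h2 (Complex.exp_ne_zero _)
      apply h3.congr
      intro k
      have hne : ((rr k : ℝ) : ℂ) * Complex.exp ((θ:ℂ) * Complex.I) ≠ 0 := by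
        apply mul_ne_zero _ (Complex.exp_ne_zero _)
        simpa using (hrr0 k).ne'
      have hcm : circleMap 0 (rr k) θ = ((rr k : ℝ) : ℂ) * Complex.exp ((θ:ℂ) * Complex.I) := by
        simp [circleMap]
      rw [hGdef, hcm, dslope_of_ne _ hne, slope_def_field, hf0 n hn, sub_zero, sub_zero]
      rfl
    have hφb : ∀ k, ∀ᵐ θ ∂μ, ‖G (circleMap 0 (rr k) θ)‖ ≤ (1:ℝ) :=
      fun k => Filter.Eventually.of_forall fun θ => hGm _ (hcirc k θ)
    have hDCT := MeasureTheory.tendsto_integral_of_dominated_convergence (μ := μ)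
      (bound := fun _ => (1:ℝ)) (fun k => (hφcont k).aestronglyMeasurable)
      (integrable_const 1) hφb hQlim
    have hconst : Filter.Tendsto (fun k => ∫ θ, G (circleMap 0 (rr k) θ) ∂μ)
        Filter.atTop (nhds ((2*Real.pi*(c n) : ℝ) : ℂ)) := by
      exact (tendsto_const_nhds : Filter.Tendsto (fun _ : ℕ => ((2*Real.pi*(c n) : ℝ) : ℂ))
        Filter.atTop (nhds _)).congr (fun k => (hφint k).symm)
    have hQint_eq : ∫ θ, Q n θ ∂μ = ((2*Real.pi*(c n) : ℝ) : ℂ) :=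
      tendsto_nhds_unique hDCT hconst
    have hQmeas : AEStronglyMeasurable (Q n) μ :=
      (aemeasurable_of_tendsto_metrizable_ae Filter.atTop
        (fun k => (hφcont k).aemeasurable) hQlim).aestronglyMeasurable
    have hQone : ∀ᵐ θ ∂μ, ‖Q n θ‖ = 1 := by
      filter_upwards [hfhat n hn, (hf n hn).2.2] with θ h1 h2
      obtain ⟨l, hl, hl1⟩ := h2
      have heq : fhat n (Complex.exp ((θ:ℂ) * Complex.I)) = l := tendsto_nhds_unique h1 hl
      show ‖fhat n (Complex.exp ((θ:ℂ) * Complex.I)) / Complex.exp ((θ:ℂ) * Complex.I)‖ = 1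
      rw [norm_div, heq, hl1, Complex.norm_exp_ofReal_mul_I, div_one]
    have hQint : Integrable (Q n) μ := by
      apply Integrable.mono' (integrable_const (1:ℝ)) hQmeas
      filter_upwards [hQone] with θ hθ
      rw [hθ]
    have hsqmeas : AEStronglyMeasurable (fun θ => ‖Q n θ - 1‖^2) μ := by
      have h1 : AEStronglyMeasurable (fun θ => Q n θ - 1) μ :=
        hQmeas.sub aestronglyMeasurable_const
      have := h1.norm.mul h1.norm
      simp only [pow_two]
      exact this
    have hsqint : Integrable (fun θ => ‖Q n θ - 1‖^2) μ := by
      apply Integrable.mono' (integrable_const (4:ℝ)) hsqmeas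
      filter_upwards [hQone] with θ hθ
      have hb : ‖Q n θ - 1‖ ≤ 2 := by
        calc ‖Q n θ - 1‖ ≤ ‖Q n θ‖ + ‖(1:ℂ)‖ := norm_sub_le _ _
          _ = 2 := by rw [hθ]; norm_num
      rw [Real.norm_eq_abs, abs_of_nonneg (sq_nonneg _)]
      nlinarith [norm_nonneg (Q n θ - 1)]
    have hIntSq : ∫ θ, ‖Q n θ - 1‖^2 ∂μ = 4*Real.pi*(1 - c n) := by
      have hid : ∀ᵐ θ ∂μ, ‖Q n θ - 1‖^2 = 2 - 2*(Q n θ).re := by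
        filter_upwards [hQone] with θ hθ
        have e : ‖Q n θ - 1‖^2 = ‖Q n θ‖^2 - 2*(Q n θ).re + 1 := by
          rw [Complex.sq_norm, Complex.sq_norm,
            Complex.normSq_apply, Complex.normSq_apply]
          simp only [Complex.sub_re, Complex.sub_im, Complex.one_re, Complex.one_im]
          ring
        rw [e, hθ]; ring
      rw [integral_congr_ae hid]
      have hre : Integrable (fun θ => (Q n θ).re) μ := hQint.re
      rw [integral_sub (integrable_const 2) (hre.const_mul 2)]
      rw [integral_const, integral_const_mul]
      have hreval : ∫ θ, (Q n θ).re ∂μ = 2*Real.pi*(c n) := by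
        have h := integral_re hQint
        rw [hQint_eq] at h
        simpa using h
      rw [hreval]
      simp only [smul_eq_mul, measureReal_def, hμuniv, ENNReal.toReal_ofReal Real.two_pi_pos.le]
      ring
    refine ⟨hQmeas, ?_⟩
    rw [← MeasureTheory.ofReal_integral_eq_lintegral_ofReal hsqint
      (Filter.Eventually.of_forall fun θ => sq_nonneg _), hIntSq]
  -- Step 3: summation and conclusion
  set g : ℕ → ℝ → ENNReal := fun n θ => if 1 ≤ n then ENNReal.ofReal (‖Q n θ - 1‖^2) else 0
    with hgdef
  have hgmeas : ∀ n, AEMeasurable (g n) μ := by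
    intro n
    by_cases hn : 1 ≤ n
    · simp only [hgdef, if_pos hn]
      exact ENNReal.measurable_ofReal.comp_aemeasurable
        ((((key n hn).1.sub aestronglyMeasurable_const).norm.aemeasurable).pow_const 2)
    · simp only [hgdef, if_neg hn]
      exact aemeasurable_const
  have hgint : ∀ n, ∫⁻ θ, g n θ ∂μ = ENNReal.ofReal (4*Real.pi * d n) := by
    intro n
    by_cases hn : 1 ≤ n
    · simp only [hgdef, if_pos hn, hd_def]
      exact (key n hn).2
    · simp [hgdef, if_neg hn, hd_def, hn]
  have htsum_ne : ∑' n, ∫⁻ θ, g n θ ∂μ ≠ ⊤ := by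
    have h1 : ∑' n, ∫⁻ θ, g n θ ∂μ = ENNReal.ofReal (∑' n, 4*Real.pi * d n) := by
      rw [tsum_congr hgint]
      exact (ENNReal.ofReal_tsum_of_nonneg
        (fun n => mul_nonneg (by positivity) (hd0 n)) (hsum.mul_left _)).symm
    rw [h1]
    exact ENNReal.ofReal_ne_top
  have hael : ∀ᵐ θ ∂μ, ∑' n, g n θ < ⊤ := by
    apply ae_lt_top' (AEMeasurable.ennreal_tsum hgmeas)
    rw [lintegral_tsum hgmeas]
    exact htsum_ne
  filter_upwards [hael] with θ hθ
  have h0 : Filter.Tendsto (fun n => g n θ) Filter.atTop (nhds 0) :=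
    ENNReal.tendsto_atTop_zero_of_tsum_ne_top hθ.ne
  have h1 : Filter.Tendsto (fun n => ‖Q n θ - 1‖^2) Filter.atTop (nhds 0) := by
    have h2 : Filter.Tendsto (fun n => (g n θ).toReal) Filter.atTop (nhds 0) := by
      have h3 := (ENNReal.tendsto_toReal (by simp : (0:ENNReal) ≠ ⊤)).comp h0
      simpa [Function.comp_def] using h3
    apply h2.congr'
    filter_upwards [Filter.eventually_ge_atTop 1] with n hn
    simp only [hgdef, if_pos hn]
    rw [ENNReal.toReal_ofReal (sq_nonneg _)]
  have h3 : Filter.Tendsto (fun n => ‖Q n θ - 1‖) Filter.atTop (nhds 0) := by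
    have h4 := (Real.continuous_sqrt.tendsto 0).comp h1
    simp only [Real.sqrt_zero] at h4
    apply h4.congr
    intro n
    simp [Real.sqrt_sq (norm_nonneg _)]
  show Filter.Tendsto (fun n => Q n θ) Filter.atTop (nhds 1)
  exact tendsto_iff_norm_sub_tendsto_zero.2 h3
end

section
/- Let (z_i)_{i∈ℕ} be a sequence in 𝔻 \ {0} with ∑_i (1 - |z_i|) < ∞. Then the infinite product B(z) = ∏_i (|z_i|/z_i)·(z_i - z)/(1 - \bar{z_i} z) converges locally uniformly on 𝔻 to a holomorphic function B : 𝔻 → 𝔻 whose zero set is exactly {z_i}. -/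
open Filter Set Finset Topology


lemma bl_norm_prod_sub_one_le {ι : Type*} (t : Finset ι) (c : ι → ℂ) :
    ‖∏ i ∈ t, c i - 1‖ ≤ ∏ i ∈ t, (1 + ‖c i - 1‖) - 1 := by
  induction t using Finset.cons_induction with
  | empty => simp
  | cons a t ha ih =>
    rw [Finset.prod_cons, Finset.prod_cons]
    have h1 : ∏ i ∈ t, c i - 1 = (∏ i ∈ t, c i) - 1 := rfl
    have hprod1 : (1:ℝ) ≤ ∏ i ∈ t, (1 + ‖c i - 1‖) := by
      calc (1:ℝ) = ∏ _i ∈ t, 1 := by simp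
      _ ≤ ∏ i ∈ t, (1 + ‖c i - 1‖) :=
        Finset.prod_le_prod (fun i _ => by norm_num) fun i _ => by
          nlinarith [norm_nonneg (c i - 1)]
    have key : c a * ∏ i ∈ t, c i - 1 = c a * (∏ i ∈ t, c i - 1) + (c a - 1) := by ring
    rw [key]
    have hca : ‖c a‖ ≤ 1 + ‖c a - 1‖ := by
      calc ‖c a‖ = ‖1 + (c a - 1)‖ := by ring_nf
      _ ≤ ‖(1:ℂ)‖ + ‖c a - 1‖ := norm_add_le _ _
      _ = 1 + ‖c a - 1‖ := by simp
    calc ‖c a * (∏ i ∈ t, c i - 1) + (c a - 1)‖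
        ≤ ‖c a‖ * ‖∏ i ∈ t, c i - 1‖ + ‖c a - 1‖ := by
          refine (norm_add_le _ _).trans ?_; rw [norm_mul]
      _ ≤ (1 + ‖c a - 1‖) * (∏ i ∈ t, (1 + ‖c i - 1‖) - 1) + ‖c a - 1‖ := by
          have h2 : ‖∏ i ∈ t, c i - 1‖ ≤ ∏ i ∈ t, (1 + ‖c i - 1‖) - 1 := ih
          have h3 : (0:ℝ) ≤ ‖∏ i ∈ t, c i - 1‖ := norm_nonneg _
          nlinarith [norm_nonneg (c a - 1)]
      _ = (1 + ‖c a - 1‖) * ∏ i ∈ t, (1 + ‖c i - 1‖) - 1 := by ring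

lemma bl_prod_le_exp {ι : Type*} (t : Finset ι) (a : ι → ℝ) (ha : ∀ i, 0 ≤ a i) :
    ∏ i ∈ t, (1 + a i) ≤ Real.exp (∑ i ∈ t, a i) := by
  rw [Real.exp_sum]
  exact Finset.prod_le_prod (fun i _ => by nlinarith [ha i]) fun i _ => by
    nlinarith [Real.add_one_le_exp (a i)]

noncomputable def blF (z w : ℂ) : ℂ :=
  ((‖z‖ : ℂ) / z) * ((z - w) / (1 - (starRingEnd ℂ) z * w))

lemma bl_den_ne_zero {z w : ℂ} (hz : ‖z‖ < 1) (hw : ‖w‖ < 1) :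
    1 - (starRingEnd ℂ) z * w ≠ 0 := by
  intro h
  have h1 : (starRingEnd ℂ) z * w = 1 := by linear_combination -h
  have := congrArg norm h1
  rw [norm_mul, norm_one] at this
  simp only [RCLike.norm_conj] at this
  nlinarith [norm_nonneg z, norm_nonneg w]

lemma bl_sub_one {z w : ℂ} (hz : ‖z‖ < 1) (hz0 : z ≠ 0) (hw : ‖w‖ < 1) :
    ‖blF z w - 1‖ ≤ (1 - ‖z‖) * ((1 + ‖w‖) / (1 - ‖w‖)) := by
  have hden := bl_den_ne_zero hz hw
  have hzn : (0:ℝ) < ‖z‖ := norm_pos_iff.2 hz0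
  have key : blF z w - 1
      = (((‖z‖:ℂ) - 1) * (z + (‖z‖:ℂ) * w)) / (z * (1 - (starRingEnd ℂ) z * w)) := by
    have h : z * (starRingEnd ℂ) z = ((‖z‖ : ℝ):ℂ)^2 := by
      rw [Complex.mul_conj, Complex.normSq_eq_norm_sq]
      push_cast; ring
    rw [blF]
    have hden' : 1 - w * (starRingEnd ℂ) z ≠ 0 := by rw [mul_comm]; exact hden
    field_simp
    linear_combination w * h
  rw [key, norm_div, norm_mul, norm_mul]
  have e1 : ‖((‖z‖:ℂ) - 1)‖ = 1 - ‖z‖ := by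
    rw [show ((‖z‖:ℂ) - 1) = (((‖z‖ - 1 : ℝ)):ℂ) by push_cast; ring, Complex.norm_real,
      Real.norm_eq_abs, abs_of_nonpos (by linarith)]
    ring
  have e2 : ‖z + (‖z‖:ℂ) * w‖ ≤ ‖z‖ * (1 + ‖w‖) := by
    refine (norm_add_le _ _).trans ?_
    rw [norm_mul, Complex.norm_real, Real.norm_eq_abs, _root_.abs_of_nonneg (norm_nonneg z)]
    ring_nf
    nlinarith [norm_nonneg w, norm_nonneg z]
  have e3 : 1 - ‖w‖ ≤ ‖1 - (starRingEnd ℂ) z * w‖ := by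
    have := norm_sub_norm_le (1:ℂ) ((starRingEnd ℂ) z * w)
    rw [norm_one, norm_mul, RCLike.norm_conj] at this
    nlinarith [norm_nonneg w, norm_nonneg z]
  calc ‖(‖z‖:ℂ) - 1‖ * ‖z + (‖z‖:ℂ) * w‖ / (‖z‖ * ‖1 - (starRingEnd ℂ) z * w‖)
      ≤ ((1 - ‖z‖) * (‖z‖ * (1 + ‖w‖))) / (‖z‖ * (1 - ‖w‖)) := by
        have hb1 : (0:ℝ) < ‖z‖ * (1 + ‖w‖) := by positivity
        apply div_le_div₀ (mul_nonneg (by linarith) hb1.le) ?_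
          (mul_pos hzn (by linarith)) ?_
        · rw [e1]
          have h1 : (0:ℝ) ≤ 1 - ‖z‖ := by linarith
          nlinarith
        · exact mul_le_mul_of_nonneg_left e3 (le_of_lt hzn)
    _ = (1 - ‖z‖) * ((1 + ‖w‖) / (1 - ‖w‖)) := by
        rw [show (1 - ‖z‖) * (‖z‖ * (1 + ‖w‖)) = ‖z‖ * ((1 - ‖z‖) * (1 + ‖w‖)) by ring,
          mul_div_mul_left _ _ (ne_of_gt hzn), mul_div_assoc]

lemma bl_norm_lt_one {z w : ℂ} (hz : ‖z‖ < 1) (hz0 : z ≠ 0) (hw : ‖w‖ < 1) :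
    ‖blF z w‖ < 1 := by
  have hden := bl_den_ne_zero hz hw
  have hzn : (0:ℝ) < ‖z‖ := norm_pos_iff.2 hz0
  have h1 : Complex.normSq (z - w) < Complex.normSq (1 - (starRingEnd ℂ) z * w) := by
    have hz2 : z.re^2 + z.im^2 < 1 := by
      have h : Complex.normSq z < 1 := by
        rw [Complex.normSq_eq_norm_sq]; nlinarith [norm_nonneg z]
      simpa [Complex.normSq_apply, sq] using h
    have hw2 : w.re^2 + w.im^2 < 1 := by
      have h : Complex.normSq w < 1 := by
        rw [Complex.normSq_eq_norm_sq]; nlinarith [norm_nonneg w]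
      simpa [Complex.normSq_apply, sq] using h
    simp only [Complex.normSq_apply, Complex.sub_re, Complex.sub_im, Complex.mul_re,
      Complex.mul_im, Complex.one_re, Complex.one_im, Complex.conj_re, Complex.conj_im]
    nlinarith [sq_nonneg (z.re - w.re), sq_nonneg (z.im - w.im)]
  have h2 : ‖z - w‖ < ‖1 - (starRingEnd ℂ) z * w‖ := by
    rw [Complex.norm_def, Complex.norm_def]
    exact Real.sqrt_lt_sqrt (Complex.normSq_nonneg _) h1
  have hD : (0:ℝ) < ‖1 - (starRingEnd ℂ) z * w‖ := norm_pos_iff.2 hden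
  rw [blF, norm_mul, norm_div, norm_div, Complex.norm_real, Real.norm_eq_abs,
    _root_.abs_of_nonneg (norm_nonneg z), div_self (ne_of_gt hzn), one_mul]
  rw [div_lt_one hD]
  exact h2

lemma bl_ne_zero {z w : ℂ} (hz : ‖z‖ < 1) (hz0 : z ≠ 0) (hw : ‖w‖ < 1) (hne : z ≠ w) :
    blF z w ≠ 0 := by
  have hden := bl_den_ne_zero hz hw
  have hzn : (‖z‖:ℂ) ≠ 0 := by
    simpa using (norm_pos_iff.2 hz0).ne'
  rw [blF]
  exact mul_ne_zero (div_ne_zero hzn hz0) (div_ne_zero (sub_ne_zero.2 hne) hden)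

lemma bl_eq_zero {z w : ℂ} (hzw : z = w) : blF z w = 0 := by
  simp [blF, hzw]

lemma bl_uniformCauchy {f : ℕ → ℂ → ℂ} {s : Set ℂ} {a : ℕ → ℝ}
    (ha : Summable a) (ha0 : ∀ i, 0 ≤ a i) (hf : ∀ i, ∀ w ∈ s, ‖f i w - 1‖ ≤ a i) :
    UniformCauchySeqOn (fun n w => ∏ i ∈ Finset.range n, f i w) atTop s := by
  rw [Metric.uniformCauchySeqOn_iff]
  intro ε hε
  set M := Real.exp (∑' i, a i) with hMdef
  have hM : 0 < M := Real.exp_pos _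
  set t₀ := Real.log (1 + ε / (2 * M)) with ht₀def
  have hεM : 0 < ε / (2 * M) := by positivity
  have ht₀ : 0 < t₀ := Real.log_pos (by linarith)
  have hexp : Real.exp t₀ = 1 + ε / (2 * M) := Real.exp_log (by linarith)
  have hS : CauchySeq (fun n => ∑ i ∈ Finset.range n, a i) :=
    ha.hasSum.tendsto_sum_nat.cauchySeq
  obtain ⟨N, hN⟩ := Metric.cauchySeq_iff.1 hS t₀ ht₀
  refine ⟨N, fun m hm n hn x hx => ?_⟩
  -- key estimate for n ≤ m
  have key : ∀ p q : ℕ, N ≤ p → p ≤ q →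
      dist ((fun n w => ∏ i ∈ Finset.range n, f i w) q x)
        ((fun n w => ∏ i ∈ Finset.range n, f i w) p x) < ε := by
    intro p q hNp hpq
    simp only [dist_eq_norm]
    have hsplit : ∏ i ∈ Finset.range q, f i x
        = (∏ i ∈ Finset.range p, f i x) * ∏ i ∈ Finset.Ico p q, f i x :=
      (Finset.prod_range_mul_prod_Ico _ hpq).symm
    rw [hsplit, show (∏ i ∈ Finset.range p, f i x) * ∏ i ∈ Finset.Ico p q, f i x
        - ∏ i ∈ Finset.range p, f i x
        = (∏ i ∈ Finset.range p, f i x) * (∏ i ∈ Finset.Ico p q, f i x - 1) by ring,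
      norm_mul]
    have hP : ‖∏ i ∈ Finset.range p, f i x‖ ≤ M := by
      rw [norm_prod]
      calc ∏ i ∈ Finset.range p, ‖f i x‖
          ≤ ∏ i ∈ Finset.range p, (1 + a i) := by
            refine Finset.prod_le_prod (fun i _ => norm_nonneg _) fun i _ => ?_
            have h1 := hf i x hx
            have h2 := norm_sub_norm_le (f i x) 1
            rw [norm_one] at h2
            linarith
        _ ≤ Real.exp (∑ i ∈ Finset.range p, a i) := bl_prod_le_exp _ _ ha0
        _ ≤ M := Real.exp_le_exp.2 (Summable.sum_le_tsum _ (fun i _ => ha0 i) ha)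
    have hT : ‖∏ i ∈ Finset.Ico p q, f i x - 1‖ < ε / (2 * M) := by
      have h1 : ‖∏ i ∈ Finset.Ico p q, f i x - 1‖
          ≤ ∏ i ∈ Finset.Ico p q, (1 + ‖f i x - 1‖) - 1 := bl_norm_prod_sub_one_le _ _
      have h2 : ∏ i ∈ Finset.Ico p q, (1 + ‖f i x - 1‖)
          ≤ Real.exp (∑ i ∈ Finset.Ico p q, a i) := by
        refine le_trans ?_ (bl_prod_le_exp _ _ ha0)
        exact Finset.prod_le_prod (fun i _ => by positivity)
          fun i _ => by linarith [hf i x hx]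
      have h3 : ∑ i ∈ Finset.Ico p q, a i < t₀ := by
        have := hN q (le_trans hNp hpq) p hNp
        rw [Finset.sum_Ico_eq_sub _ hpq]
        rw [Real.dist_eq] at this
        exact lt_of_le_of_lt (le_abs_self _) this
      have h4 : Real.exp (∑ i ∈ Finset.Ico p q, a i) < Real.exp t₀ :=
        Real.exp_lt_exp.2 h3
      rw [hexp] at h4
      linarith
    calc ‖∏ i ∈ Finset.range p, f i x‖ * ‖∏ i ∈ Finset.Ico p q, f i x - 1‖
        ≤ M * ‖∏ i ∈ Finset.Ico p q, f i x - 1‖ :=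
          mul_le_mul_of_nonneg_right hP (norm_nonneg _)
      _ < M * (ε / (2 * M)) := by
          exact mul_lt_mul_of_pos_left hT hM
      _ = ε / 2 := by field_simp
      _ < ε := by linarith
  rcases le_total n m with h | h
  · exact key n m hn h
  · rw [dist_comm]; exact key m n hm h


theorem blaschke_product_converges (z : ℕ → ℂ)
    (hz : ∀ i, z i ∈ Metric.ball (0:ℂ) 1 ∧ z i ≠ 0)
    (hsum : Summable (fun i => 1 - ‖z i‖)) :
    ∃ B : ℂ → ℂ,
      TendstoLocallyUniformlyOn
        (fun n w => ∏ i ∈ Finset.range n,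
          ((‖z i‖ : ℂ) / z i) * ((z i - w) / (1 - (starRingEnd ℂ) (z i) * w)))
        B atTop (Metric.ball 0 1) ∧
      DifferentiableOn ℂ B (Metric.ball 0 1) ∧
      Set.MapsTo B (Metric.ball 0 1) (Metric.ball 0 1) ∧
      ∀ w ∈ Metric.ball (0:ℂ) 1, (B w = 0 ↔ ∃ i, z i = w) := by
  have hz1 : ∀ i, ‖z i‖ < 1 := fun i => mem_ball_zero_iff.1 (hz i).1
  have hz0 : ∀ i, z i ≠ 0 := fun i => (hz i).2
  set P : ℕ → ℂ → ℂ := fun n w => ∏ i ∈ Finset.range n, blF (z i) w with hPdef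
  have hb : ∀ r : ℝ, 0 ≤ r → r < 1 → ∀ i, ∀ w ∈ Metric.closedBall (0:ℂ) r,
      ‖blF (z i) w - 1‖ ≤ (1 - ‖z i‖) * ((1 + r) / (1 - r)) := by
    intro r hr0 hr1 i w hwB
    have hw : ‖w‖ ≤ r := mem_closedBall_zero_iff.1 hwB
    have hw1 : ‖w‖ < 1 := lt_of_le_of_lt hw hr1
    refine (bl_sub_one (hz1 i) (hz0 i) hw1).trans ?_
    have hzi : (0:ℝ) ≤ 1 - ‖z i‖ := by linarith [hz1 i]
    apply mul_le_mul_of_nonneg_left ?_ hzi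
    rw [div_le_div_iff₀ (by linarith [norm_nonneg w]) (by linarith)]
    nlinarith [norm_nonneg w]
  have hsum' : ∀ C : ℝ, Summable (fun i => (1 - ‖z i‖) * C) := fun C => hsum.mul_right C
  have hUC : ∀ r : ℝ, 0 ≤ r → r < 1 →
      UniformCauchySeqOn P atTop (Metric.closedBall 0 r) := by
    intro r hr0 hr1
    exact bl_uniformCauchy (hsum' _)
      (fun i => mul_nonneg (by linarith [hz1 i]) (div_nonneg (by linarith) (by linarith)))
      (hb r hr0 hr1)
  set B : ℂ → ℂ := fun w => limUnder atTop (fun n => P n w) with hBdef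
  have hten : ∀ w ∈ Metric.ball (0:ℂ) 1, Tendsto (fun n => P n w) atTop (𝓝 (B w)) := by
    intro w hw
    have hw1 : ‖w‖ < 1 := mem_ball_zero_iff.1 hw
    have hc := (hUC ‖w‖ (norm_nonneg w) hw1).cauchySeq (mem_closedBall_zero_iff.2 le_rfl)
    exact hc.tendsto_limUnder
  have hTLU : TendstoLocallyUniformlyOn P B atTop (Metric.ball 0 1) := by
    rw [tendstoLocallyUniformlyOn_iff_forall_isCompact Metric.isOpen_ball]
    intro K hKs hK
    rcases K.eq_empty_or_nonempty with rfl | hne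
    · intro u hu
      filter_upwards with n x hx
      exact absurd hx (Set.notMem_empty x)
    obtain ⟨w₀, hw₀K, hmax⟩ := hK.exists_isMaxOn hne continuous_norm.continuousOn
    have hr1 : ‖w₀‖ < 1 := mem_ball_zero_iff.1 (hKs hw₀K)
    have hsub : K ⊆ Metric.closedBall 0 ‖w₀‖ := fun x hx => mem_closedBall_zero_iff.2 (hmax hx)
    exact ((hUC _ (norm_nonneg w₀) hr1).tendstoUniformlyOn_of_tendsto
      (fun x hx => hten x (mem_ball_zero_iff.2
        (lt_of_le_of_lt (mem_closedBall_zero_iff.1 hx) hr1)))).mono hsub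
  refine ⟨B, hTLU, ?_, ?_, ?_⟩
  · apply hTLU.differentiableOn ?_ Metric.isOpen_ball
    filter_upwards with n
    apply DifferentiableOn.fun_finset_prod
    intro i _
    have hdiv : DifferentiableOn ℂ
        (fun w => (z i - w) / (1 - (starRingEnd ℂ) (z i) * w)) (Metric.ball 0 1) := by
      apply DifferentiableOn.div
      · exact ((differentiable_const (z i)).sub differentiable_id).differentiableOn
      · exact ((differentiable_const (1:ℂ)).sub
          (differentiable_id.const_mul ((starRingEnd ℂ) (z i)))).differentiableOn
      · intro w hw
        exact bl_den_ne_zero (hz1 i) (mem_ball_zero_iff.1 hw)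
    exact hdiv.const_mul _
  · intro w hw
    have hw1 : ‖w‖ < 1 := mem_ball_zero_iff.1 hw
    have h1 : ∀ m, 1 ≤ m → ‖P m w‖ ≤ ‖blF (z 0) w‖ := by
      intro m hm
      have hsp : P m w = blF (z 0) w * ∏ i ∈ Finset.Ico 1 m, blF (z i) w :=
        Finset.prod_range_eq_mul_Ico _ hm
      rw [hsp, norm_mul]
      have h2 : ‖∏ i ∈ Finset.Ico 1 m, blF (z i) w‖ ≤ 1 := by
        rw [norm_prod]
        exact Finset.prod_le_one (fun i _ => norm_nonneg _)
          (fun i _ => (bl_norm_lt_one (hz1 i) (hz0 i) hw1).le)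
      nlinarith [norm_nonneg (blF (z 0) w)]
    have h3 : ‖B w‖ ≤ ‖blF (z 0) w‖ := by
      apply le_of_tendsto (hten w hw).norm
      filter_upwards [eventually_ge_atTop 1] with m hm using h1 m hm
    exact mem_ball_zero_iff.2 (lt_of_le_of_lt h3 (bl_norm_lt_one (hz1 0) (hz0 0) hw1))
  · intro w hw
    have hw1 : ‖w‖ < 1 := mem_ball_zero_iff.1 hw
    constructor
    · intro hB0
      by_contra hno
      push_neg at hno
      set a : ℕ → ℝ := fun i => (1 - ‖z i‖) * ((1 + ‖w‖) / (1 - ‖w‖)) with hadef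
      have haS : Summable a := hsum' _
      have ha0 : ∀ i, 0 ≤ a i := fun i => mul_nonneg (by linarith [hz1 i])
        (div_nonneg (by linarith [norm_nonneg w]) (by linarith))
      have hfa : ∀ i, ‖blF (z i) w - 1‖ ≤ a i := fun i => bl_sub_one (hz1 i) (hz0 i) hw1
      have hSc : CauchySeq (fun n => ∑ i ∈ Finset.range n, a i) :=
        haS.hasSum.tendsto_sum_nat.cauchySeq
      obtain ⟨N, hN⟩ := Metric.cauchySeq_iff'.1 hSc (Real.log (3/2))
        (Real.log_pos (by norm_num))
      set T : ℕ → ℂ := fun m => ∏ i ∈ Finset.Ico N m, blF (z i) w with hTdef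
      have hTlow : ∀ m, N ≤ m → (1:ℝ)/2 ≤ ‖T m‖ := by
        intro m hm
        have h1 : ‖T m - 1‖ ≤ ∏ i ∈ Finset.Ico N m, (1 + ‖blF (z i) w - 1‖) - 1 :=
          bl_norm_prod_sub_one_le _ _
        have h2 : ∏ i ∈ Finset.Ico N m, (1 + ‖blF (z i) w - 1‖)
            ≤ Real.exp (∑ i ∈ Finset.Ico N m, a i) := by
          refine le_trans ?_ (bl_prod_le_exp _ _ ha0)
          exact Finset.prod_le_prod (fun i _ => by positivity) fun i _ => by linarith [hfa i]
        have h3 : ∑ i ∈ Finset.Ico N m, a i < Real.log (3/2) := by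
          have hd := hN m hm
          rw [Finset.sum_Ico_eq_sub _ hm]
          rw [Real.dist_eq] at hd
          exact lt_of_le_of_lt (le_abs_self _) hd
        have h4 : Real.exp (∑ i ∈ Finset.Ico N m, a i) < 3/2 := by
          calc Real.exp (∑ i ∈ Finset.Ico N m, a i) < Real.exp (Real.log (3/2)) :=
                Real.exp_lt_exp.2 h3
            _ = 3/2 := Real.exp_log (by norm_num)
        have h5 : ‖T m - 1‖ < 1/2 := by linarith
        have h6 := norm_sub_norm_le (1:ℂ) (T m)
        rw [norm_one, norm_sub_rev] at h6
        linarith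
      have hPN : P N w ≠ 0 := by
        refine Finset.prod_ne_zero_iff.2 fun i _ => ?_
        exact bl_ne_zero (hz1 i) (hz0 i) hw1 (hno i)
      have hTt : Tendsto T atTop (𝓝 (B w / P N w)) := by
        have h7 : Tendsto (fun m => P m w / P N w) atTop (𝓝 (B w / P N w)) :=
          (hten w hw).div_const _
        apply h7.congr'
        filter_upwards [eventually_ge_atTop N] with m hm
        rw [div_eq_iff hPN]
        have h10 := Finset.prod_range_mul_prod_Ico (fun i => blF (z i) w) hm
        linear_combination -h10
      rw [hB0, zero_div] at hTt
      have h8 : Tendsto (fun m => ‖T m‖) atTop (𝓝 0) := by simpa using hTt.norm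
      have h9 : (1:ℝ)/2 ≤ 0 := ge_of_tendsto h8
        (by filter_upwards [eventually_ge_atTop N] with m hm using hTlow m hm)
      linarith
    · rintro ⟨i, hi⟩
      have hzero : ∀ m, i < m → P m w = 0 := fun m hm =>
        Finset.prod_eq_zero (Finset.mem_range.2 hm) (bl_eq_zero hi)
      have hlim0 : Tendsto (fun n => P n w) atTop (𝓝 0) := by
        apply Tendsto.congr' ?_ tendsto_const_nhds
        filter_upwards [eventually_gt_atTop i] with m hm using (hzero m hm).symm
      exact tendsto_nhds_unique (hten w hw) hlim0
end
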